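/- arXiv:math/0509259 — 2 statements merged into one kernel-verified Lean document; each statement's English description precedes it below -/
import Mathlib

section
/- For every n ≥ 1 and for every choice of two distinct corner vertices u and v of S_n, the Sierpiński gasket graph S_n has a Hamiltonian path from u to v. -/
/-- Vertex set of the Sierpiński gasket graph `Sₙ`, realized in the triangular
lattice with side length `2^(n-1)`. (`sierpVerts 0` is an unused dummy.) -/
def sierpVerts : ℕ → Finset (ℤ × ℤ)
  | 0 => {(0, 0)}
  | 1 => {(0, 0), (1, 0), (0, 1)}
  | n + 2 =>
      sierpVerts (n + 1) ∪
        (sierpVerts (n + 1)).image (fun p => (p.1 + 2 ^ n, p.2)) ∪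
        (sierpVerts (n + 1)).image (fun p => (p.1, p.2 + 2 ^ n))

/-- Edge set (as ordered pairs, up to the symmetrization below) of `Sₙ`:
`S₁ = K₃`, and `S_{n+2}` is the union of three shifted copies of `S_{n+1}`. -/
def sierpEdges : ℕ → Finset ((ℤ × ℤ) × (ℤ × ℤ))
  | 0 => ∅
  | 1 => {((0, 0), (1, 0)), ((0, 0), (0, 1)), ((1, 0), (0, 1))}
  | n + 2 =>
      sierpEdges (n + 1) ∪
        (sierpEdges (n + 1)).image
          (fun e => ((e.1.1 + 2 ^ n, e.1.2), (e.2.1 + 2 ^ n, e.2.2))) ∪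
        (sierpEdges (n + 1)).image
          (fun e => ((e.1.1, e.1.2 + 2 ^ n), (e.2.1, e.2.2 + 2 ^ n)))

/-- The Sierpiński gasket graph `Sₙ` (meaningful for `n ≥ 1`). -/
def sierpGraph (n : ℕ) : SimpleGraph {p : ℤ × ℤ // p ∈ sierpVerts n} where
  Adj u v := u ≠ v ∧ ((u.1, v.1) ∈ sierpEdges n ∨ (v.1, u.1) ∈ sierpEdges n)
  symm := ⟨by rintro u v ⟨h1, h2⟩; exact ⟨h1.symm, h2.symm⟩⟩
  loopless := ⟨fun u h => h.1 rfl⟩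

instance (n : ℕ) : DecidableRel (sierpGraph n).Adj := fun u v =>
  inferInstanceAs (Decidable (u ≠ v ∧ ((u.1, v.1) ∈ sierpEdges n ∨ (v.1, u.1) ∈ sierpEdges n)))

/-- The three corner (degree-two) vertices of `Sₙ`. -/
def sierpCorners (n : ℕ) : Finset (ℤ × ℤ) :=
  {(0, 0), (2 ^ (n - 1), 0), (0, 2 ^ (n - 1))}


namespace SP

abbrev Pt := ℤ × ℤ

def E (n : ℕ) (a b : Pt) : Prop := (a, b) ∈ sierpEdges n ∨ (b, a) ∈ sierpEdges n

instance (n : ℕ) : DecidableRel (E n) := fun _ _ => inferInstanceAs (Decidable (_ ∨ _))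

lemma mem_verts_succ (n : ℕ) (p : Pt) :
    p ∈ sierpVerts (n + 2) ↔ p ∈ sierpVerts (n + 1) ∨
      (p.1 - 2 ^ n, p.2) ∈ sierpVerts (n + 1) ∨ (p.1, p.2 - 2 ^ n) ∈ sierpVerts (n + 1) := by
  show p ∈ (_ ∪ _ ∪ _) ↔ _
  simp only [Finset.mem_union, Finset.mem_image]
  constructor
  · rintro ((h | ⟨q, hq, rfl⟩) | ⟨q, hq, rfl⟩)
    · exact Or.inl h
    · exact Or.inr (Or.inl (by simpa using hq))
    · exact Or.inr (Or.inr (by simpa using hq))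
  · rintro (h | h | h)
    · exact Or.inl (Or.inl h)
    · exact Or.inl (Or.inr ⟨_, h, by simp⟩)
    · exact Or.inr ⟨_, h, by simp⟩

lemma verts_bound : ∀ (n : ℕ), ∀ p ∈ sierpVerts (n + 1),
    0 ≤ p.1 ∧ 0 ≤ p.2 ∧ p.1 + p.2 ≤ 2 ^ n := by
  intro n
  induction n with
  | zero =>
    intro p hp
    have : p ∈ ({(0,0),(1,0),(0,1)} : Finset Pt) := hp
    simp only [Finset.mem_insert, Finset.mem_singleton] at this
    rcases this with rfl | rfl | rfl <;> norm_num
  | succ m ih =>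
    intro p hp
    rw [mem_verts_succ] at hp
    have h2 : (0:ℤ) < 2 ^ m := by positivity
    have hps : (2:ℤ) ^ (m+1) = 2 ^ m + 2 ^ m := by ring
    rcases hp with h | h | h
    · have := ih p h; omega
    · have := ih _ h; simp at this; omega
    · have := ih _ h; simp at this; omega

lemma corner_mem (n : ℕ) :
    ((0,0) : Pt) ∈ sierpVerts (n+1) ∧ (((2:ℤ)^n, 0) : Pt) ∈ sierpVerts (n+1) ∧
      (((0:ℤ), (2:ℤ)^n) : Pt) ∈ sierpVerts (n+1) := by
  induction n with
  | zero =>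
    refine ⟨?_, ?_, ?_⟩ <;> · show _ ∈ ({(0,0),(1,0),(0,1)} : Finset Pt); decide
  | succ m ih =>
    obtain ⟨h0, hx, hy⟩ := ih
    have hps : (2:ℤ) ^ (m+1) = 2 ^ m + 2 ^ m := by ring
    refine ⟨?_, ?_, ?_⟩ <;> rw [mem_verts_succ]
    · exact Or.inl h0
    · right; left; simp [hps]; convert hx using 2 <;> ring
    · right; right; simp [hps]; convert hy using 2 <;> ring

lemma glueX {n : ℕ} {p : Pt} (h1 : p ∈ sierpVerts (n+1))
    (h2 : (p.1 - 2^n, p.2) ∈ sierpVerts (n+1)) : p = ((2:ℤ)^n, 0) := by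
  have b1 := verts_bound n p h1
  have b2 := verts_bound n _ h2
  simp at b2
  have : p = (p.1, p.2) := rfl
  rw [this, Prod.mk.injEq]; omega

lemma glueY {n : ℕ} {p : Pt} (h1 : p ∈ sierpVerts (n+1))
    (h2 : (p.1, p.2 - 2^n) ∈ sierpVerts (n+1)) : p = (0, (2:ℤ)^n) := by
  have b1 := verts_bound n p h1
  have b2 := verts_bound n _ h2
  simp at b2
  have : p = (p.1, p.2) := rfl
  rw [this, Prod.mk.injEq]; omega

lemma glueXY {n : ℕ} {p : Pt} (h1 : (p.1 - 2^n, p.2) ∈ sierpVerts (n+1))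
    (h2 : (p.1, p.2 - 2^n) ∈ sierpVerts (n+1)) : p = ((2:ℤ)^n, (2:ℤ)^n) := by
  have b1 := verts_bound n _ h1
  have b2 := verts_bound n _ h2
  simp at b1 b2
  have : p = (p.1, p.2) := rfl
  rw [this, Prod.mk.injEq]; omega


lemma edges_ne : ∀ (n : ℕ) (a b : Pt), (a, b) ∈ sierpEdges n → a ≠ b := by
  intro n
  induction n using Nat.strong_induction_on with
  | _ n ih =>
    match n with
    | 0 => intro a b h; simp [sierpEdges] at h
    | 1 =>
      intro a b h
      have : (a, b) ∈ ({((0,0),(1,0)), ((0,0),(0,1)), ((1,0),(0,1))} :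
        Finset (Pt × Pt)) := h
      simp only [Finset.mem_insert, Finset.mem_singleton, Prod.mk.injEq] at this
      rcases this with ⟨rfl, rfl⟩ | ⟨rfl, rfl⟩ | ⟨rfl, rfl⟩ <;> decide
    | m + 2 =>
      intro a b h
      have hm : (a, b) ∈ (_ ∪ _ ∪ _ : Finset (Pt × Pt)) := h
      simp only [Finset.mem_union, Finset.mem_image, Prod.mk.injEq] at hm
      rcases hm with (hm | ⟨e, he, h1, h2⟩) | ⟨e, he, h1, h2⟩
      · exact ih (m+1) (by omega) a b hm
      all_goals {
        have hne := ih (m+1) (by omega) e.1 e.2 (by simpa using he)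
        subst h1; subst h2
        intro hc
        apply hne
        rw [Prod.ext_iff] at hc ⊢
        simp only [Prod.fst, Prod.snd] at hc ⊢
        omega }

lemma E_ne {n : ℕ} {a b : Pt} (h : E n a b) : a ≠ b := by
  rcases h with h | h
  · exact edges_ne n a b h
  · exact (edges_ne n b a h).symm

def HamL (n : ℕ) (u v : Pt) (c : Pt → ℕ) (l : List Pt) : Prop :=
  l.Chain' (E n) ∧ l.head? = some u ∧ l.getLast? = some v ∧ ∀ x, l.count x = c x

lemma E_symm {n : ℕ} {a b : Pt} (h : E n a b) : E n b a := h.symm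

lemma count_map_eq (f : Pt → Pt) (hinj : Function.Injective f) (l : List Pt) (x : Pt) :
    (l.map f).count (f x) = l.count x := by
  induction l with
  | nil => rfl
  | cons a t ih =>
    rw [List.map_cons, List.count_cons, List.count_cons, ih]
    congr 1
    by_cases h : a = x
    · subst h; simp
    · have h2 : f a ≠ f x := fun hh => h (hinj hh)
      simp [beq_iff_eq, h, h2]

lemma HamL.rev {n : ℕ} {u v : Pt} {c : Pt → ℕ} {l : List Pt} (h : HamL n u v c l) :
    HamL n v u c l.reverse := by
  obtain ⟨hc, hh, hl, hcnt⟩ := h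
  refine ⟨?_, ?_, ?_, ?_⟩
  · unfold List.Chain'; rw [List.isChain_reverse]
    exact hc.imp fun {a b} h => E_symm h
  · rwa [List.head?_reverse]
  · rwa [List.getLast?_reverse]
  · intro x; rw [List.count_reverse]; exact hcnt x

lemma edges_lift {n : ℕ} {e : Pt × Pt} (h : e ∈ sierpEdges (n+1)) : e ∈ sierpEdges (n+2) := by
  show e ∈ (_ ∪ _ ∪ _ : Finset (Pt × Pt))
  simp only [Finset.mem_union]
  exact Or.inl (Or.inl h)

lemma edges_shiftX {n : ℕ} {a b : Pt} (h : (a, b) ∈ sierpEdges (n+1)) :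
    ((a.1 + 2^n, a.2), (b.1 + 2^n, b.2)) ∈ sierpEdges (n+2) := by
  show _ ∈ (_ ∪ _ ∪ _ : Finset (Pt × Pt))
  simp only [Finset.mem_union, Finset.mem_image]
  exact Or.inl (Or.inr ⟨(a, b), h, rfl⟩)

lemma edges_shiftY {n : ℕ} {a b : Pt} (h : (a, b) ∈ sierpEdges (n+1)) :
    ((a.1, a.2 + 2^n), (b.1, b.2 + 2^n)) ∈ sierpEdges (n+2) := by
  show _ ∈ (_ ∪ _ ∪ _ : Finset (Pt × Pt))
  simp only [Finset.mem_union, Finset.mem_image]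
  exact Or.inr ⟨(a, b), h, rfl⟩

lemma HamL.lift {n : ℕ} {u v : Pt} {c : Pt → ℕ} {l : List Pt} (h : HamL (n+1) u v c l) :
    HamL (n+2) u v c l :=
  ⟨h.1.imp (fun {a b} hx => hx.imp edges_lift edges_lift), h.2.1, h.2.2.1, h.2.2.2⟩

lemma HamL.shiftX {n : ℕ} {u v : Pt} {c : Pt → ℕ} {l : List Pt} (h : HamL (n+1) u v c l) :
    HamL (n+2) (u.1 + 2^n, u.2) (v.1 + 2^n, v.2) (fun x => c (x.1 - 2^n, x.2))
      (l.map (fun p => (p.1 + 2^n, p.2))) := by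
  obtain ⟨hc, hh, hl, hcnt⟩ := h
  have hinj : Function.Injective (fun p : Pt => (p.1 + 2^n, p.2)) := by
    intro a b hab
    rw [Prod.ext_iff] at hab ⊢
    simp at hab; omega
  refine ⟨?_, ?_, ?_, ?_⟩
  · unfold List.Chain'; rw [List.isChain_map]
    exact hc.imp fun {a b} hx => hx.imp edges_shiftX edges_shiftX
  · rw [List.head?_map, hh]; rfl
  · rw [List.getLast?_map, hl]; rfl
  · intro x
    have h : List.count (x.1 - 2^n + 2^n, x.2) (l.map (fun p : Pt => (p.1 + 2^n, p.2)))
        = List.count (x.1 - 2^n, x.2) l := count_map_eq _ hinj l ((x.1 - 2^n, x.2) : Pt)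
    have hx : ((x.1 - 2^n + 2^n, x.2) : Pt) = x := by rw [Prod.ext_iff]; constructor <;> simp
    rw [hx] at h
    rw [h, hcnt]

lemma HamL.shiftY {n : ℕ} {u v : Pt} {c : Pt → ℕ} {l : List Pt} (h : HamL (n+1) u v c l) :
    HamL (n+2) (u.1, u.2 + 2^n) (v.1, v.2 + 2^n) (fun x => c (x.1, x.2 - 2^n))
      (l.map (fun p => (p.1, p.2 + 2^n))) := by
  obtain ⟨hc, hh, hl, hcnt⟩ := h
  have hinj : Function.Injective (fun p : Pt => (p.1, p.2 + 2^n)) := by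
    intro a b hab
    rw [Prod.ext_iff] at hab ⊢
    simp at hab; omega
  refine ⟨?_, ?_, ?_, ?_⟩
  · unfold List.Chain'; rw [List.isChain_map]
    exact hc.imp fun {a b} hx => hx.imp edges_shiftY edges_shiftY
  · rw [List.head?_map, hh]; rfl
  · rw [List.getLast?_map, hl]; rfl
  · intro x
    have h : List.count (x.1, x.2 - 2^n + 2^n) (l.map (fun p : Pt => (p.1, p.2 + 2^n)))
        = List.count (x.1, x.2 - 2^n) l := count_map_eq _ hinj l ((x.1, x.2 - 2^n) : Pt)
    have hx : ((x.1, x.2 - 2^n + 2^n) : Pt) = x := by rw [Prod.ext_iff]; constructor <;> simp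
    rw [hx] at h
    rw [h, hcnt]

lemma HamL.glue {n : ℕ} {u a v : Pt} {c1 c2 c : Pt → ℕ} {l1 l2 : List Pt}
    (h1 : HamL n u a c1 l1) (h2 : HamL n a v c2 l2) (hav : a ≠ v)
    (hc : ∀ x, c1 x + c2 x = c x + (if x = a then 1 else 0)) :
    HamL n u v c (l1 ++ l2.tail) := by
  obtain ⟨hc1, hh1, hl1, hcnt1⟩ := h1
  obtain ⟨hc2, hh2, hl2, hcnt2⟩ := h2
  have hl1ne : l1 ≠ [] := by intro h; rw [h] at hh1; simp at hh1
  obtain ⟨t, ht⟩ : ∃ t, l2 = a :: t := by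
    cases l2 with
    | nil => simp at hh2
    | cons x t => simp at hh2; exact ⟨t, by rw [hh2]⟩
  subst ht
  have htne : t ≠ [] := by
    rintro rfl
    simp at hl2
    exact hav hl2
  obtain ⟨b, t', rfl⟩ : ∃ b t', t = b :: t' := by
    cases t with
    | nil => exact absurd rfl htne
    | cons b t' => exact ⟨b, t', rfl⟩
  unfold List.Chain' at hc2; rw [List.isChain_cons_cons] at hc2
  refine ⟨?_, ?_, ?_, ?_⟩
  · unfold List.Chain'; rw [List.isChain_append]
    refine ⟨hc1, hc2.2, ?_⟩
    intro x hx y hy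
    rw [hl1] at hx
    simp at hx hy
    rw [← hx, ← hy]
    exact hc2.1
  · rw [List.head?_append_of_ne_nil _ hl1ne]
    exact hh1
  · show (l1 ++ (b :: t')).getLast? = some v
    rw [List.getLast?_append_of_ne_nil _ (by simp)]
    simpa using hl2
  · intro x
    have e1 := hcnt1 x
    have e2 := hcnt2 x
    have e3 := hc x
    rw [List.count_cons] at e2
    rw [List.count_append, List.tail_cons]
    rcases eq_or_ne x a with rfl | hxa
    · simp only [beq_iff_eq, if_pos rfl] at e2 e3
      omega
    · simp only [beq_iff_eq, if_neg (Ne.symm hxa)] at e2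
      simp only [if_neg hxa] at e3
      omega

lemma HamL.glue3 {n : ℕ} {u a b v : Pt} {c1 c2 c3 c : Pt → ℕ} {l1 l2 l3 : List Pt}
    (h1 : HamL n u a c1 l1) (h2 : HamL n a b c2 l2) (h3 : HamL n b v c3 l3)
    (hab : a ≠ b) (hbv : b ≠ v)
    (hc : ∀ x, c1 x + c2 x + c3 x = c x + (if x = a then 1 else 0) + (if x = b then 1 else 0)) :
    HamL n u v c (l1 ++ l2.tail ++ l3.tail) := by
  have ha2 : l2.count a = c2 a := h2.2.2.2 a
  have ha1 : 1 ≤ l2.count a := by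
    rw [List.one_le_count_iff]
    exact List.mem_of_mem_head? (by rw [h2.2.1]; rfl)
  have h12 : HamL n u b (fun x => c1 x + c2 x - (if x = a then 1 else 0)) (l1 ++ l2.tail) := by
    refine h1.glue h2 hab ?_
    intro x
    rcases eq_or_ne x a with rfl | hxa
    · simp; omega
    · simp only [if_neg hxa]; omega
  refine h12.glue h3 hbv ?_
  intro x
  have e3 := hc x
  rcases eq_or_ne x a with rfl | hxa
  · rw [if_neg hab] at e3 ⊢
    simp at e3 ⊢
    omega
  · simp only [if_neg hxa] at e3 ⊢
    rcases eq_or_ne x b with rfl | hxb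
    · simp only [if_pos rfl] at e3 ⊢; omega
    · simp only [if_neg hxb] at e3 ⊢; omega


def cA (n : ℕ) : Pt → ℕ := fun x => if x ∈ sierpVerts n then 1 else 0
def cB (n : ℕ) (w : Pt) : Pt → ℕ := fun x => if x ∈ sierpVerts n ∧ x ≠ w then 1 else 0

def Good (n : ℕ) : Prop :=
  (∃ l, HamL (n+1) (0,0) ((2:ℤ)^n, 0) (cA (n+1)) l) ∧
  (∃ l, HamL (n+1) (0,0) (0, (2:ℤ)^n) (cA (n+1)) l) ∧
  (∃ l, HamL (n+1) ((2:ℤ)^n, 0) (0, (2:ℤ)^n) (cA (n+1)) l) ∧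
  (∃ l, HamL (n+1) (0,0) ((2:ℤ)^n, 0) (cB (n+1) (0, (2:ℤ)^n)) l) ∧
  (∃ l, HamL (n+1) (0,0) (0, (2:ℤ)^n) (cB (n+1) ((2:ℤ)^n, 0)) l) ∧
  (∃ l, HamL (n+1) ((2:ℤ)^n, 0) (0, (2:ℤ)^n) (cB (n+1) (0,0)) l)

lemma mem_verts1 {x : Pt} (h : x ∈ sierpVerts 1) :
    x = (0,0) ∨ x = (1,0) ∨ x = (0,1) := by
  have h' : x ∈ ({(0,0),(1,0),(0,1)} : Finset Pt) := h
  simpa using h'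

lemma good_zero : Good 0 := by
  refine ⟨⟨[(0,0),(0,1),(1,0)], ?_, rfl, rfl, ?_⟩, ⟨[(0,0),(1,0),(0,1)], ?_, rfl, rfl, ?_⟩,
    ⟨[(1,0),(0,0),(0,1)], ?_, rfl, rfl, ?_⟩, ⟨[(0,0),(1,0)], ?_, rfl, rfl, ?_⟩,
    ⟨[(0,0),(0,1)], ?_, rfl, rfl, ?_⟩, ⟨[(1,0),(0,1)], ?_, rfl, rfl, ?_⟩⟩
  all_goals first
  | · simp only [List.Chain', List.isChain_cons_cons, List.isChain_singleton, and_true]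
      first
      | refine ⟨?_, ?_⟩ <;> decide
      | decide
  | · intro x
      by_cases h0 : x = ((0:ℤ),(0:ℤ))
      · subst h0; decide
      by_cases h1 : x = ((1:ℤ),(0:ℤ))
      · subst h1; decide
      by_cases h2 : x = ((0:ℤ),(1:ℤ))
      · subst h2; decide
      have hx : x ∉ sierpVerts 1 := by
        intro h; rcases mem_verts1 h with rfl|rfl|rfl <;> simp_all
      rw [List.count_eq_zero.mpr (by intro hm; fin_cases hm <;> simp_all)]
      simp [cA, cB, hx]



lemma identities (m : ℕ) (x : Pt) :
    (cB (m+1) ((2:ℤ)^m,0) x + cA (m+1) (x.1, x.2-2^m) + cA (m+1) (x.1-2^m, x.2)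
      = cA (m+2) x + (if x = (0,(2:ℤ)^m) then 1 else 0)
        + (if x = ((2:ℤ)^m,(2:ℤ)^m) then 1 else 0)) ∧
    (cB (m+1) (0,(2:ℤ)^m) x + cA (m+1) (x.1-2^m, x.2) + cA (m+1) (x.1, x.2-2^m)
      = cA (m+2) x + (if x = ((2:ℤ)^m,0) then 1 else 0)
        + (if x = ((2:ℤ)^m,(2:ℤ)^m) then 1 else 0)) ∧
    (cA (m+1) (x.1-2^m,x.2) + cA (m+1) x + cB (m+1) ((2:ℤ)^m,0) (x.1, x.2-2^m)
      = cA (m+2) x + (if x = ((2:ℤ)^m,0) then 1 else 0)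
        + (if x = (0,(2:ℤ)^m) then 1 else 0)) ∧
    (cB (m+1) ((2:ℤ)^m,0) x + cB (m+1) (0,(2:ℤ)^m) (x.1,x.2-2^m) + cA (m+1) (x.1-2^m,x.2)
      = cB (m+2) (0, (2:ℤ)^m+2^m) x + (if x = (0,(2:ℤ)^m) then 1 else 0)
        + (if x = ((2:ℤ)^m,(2:ℤ)^m) then 1 else 0)) ∧
    (cB (m+1) (0,(2:ℤ)^m) x + cB (m+1) ((2:ℤ)^m,0) (x.1-2^m,x.2) + cA (m+1) (x.1,x.2-2^m)
      = cB (m+2) ((2:ℤ)^m+2^m, 0) x + (if x = ((2:ℤ)^m,0) then 1 else 0)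
        + (if x = ((2:ℤ)^m,(2:ℤ)^m) then 1 else 0)) ∧
    (cA (m+1) (x.1-2^m,x.2) + cB (m+1) (0,0) x + cB (m+1) ((2:ℤ)^m,0) (x.1,x.2-2^m)
      = cB (m+2) (0,0) x + (if x = ((2:ℤ)^m,0) then 1 else 0)
        + (if x = (0,(2:ℤ)^m) then 1 else 0)) := by
  have hs : (0:ℤ) < 2^m := by positivity
  obtain ⟨hO, hX, hY⟩ := corner_mem m
  have mk : ∀ a b : ℤ, x.1 = a ∧ x.2 = b → x = (a, b) := by
    rintro a b ⟨ha, hb⟩; rw [Prod.ext_iff]; exact ⟨ha, hb⟩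
  have rP1g : x = ((2:ℤ)^m, 0) → ((x.1 - 2^m, x.2) : Pt) ∈ sierpVerts (m+1) := by
    rintro rfl; simpa using hO
  have rP1v : x = ((2:ℤ)^m, 0) → x ∈ sierpVerts (m+1) := by rintro rfl; exact hX
  have rP2g : x = (0, (2:ℤ)^m) → ((x.1, x.2 - 2^m) : Pt) ∈ sierpVerts (m+1) := by
    rintro rfl; simpa using hO
  have rP2v : x = (0, (2:ℤ)^m) → x ∈ sierpVerts (m+1) := by rintro rfl; exact hY
  have rP3a : x = ((2:ℤ)^m, (2:ℤ)^m) → ((x.1 - 2^m, x.2) : Pt) ∈ sierpVerts (m+1) := by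
    rintro rfl; simpa using hY
  have rP3b : x = ((2:ℤ)^m, (2:ℤ)^m) → ((x.1, x.2 - 2^m) : Pt) ∈ sierpVerts (m+1) := by
    rintro rfl; simpa using hX
  have rP4 : x = ((2:ℤ)^m + 2^m, 0) → ((x.1 - 2^m, x.2) : Pt) ∈ sierpVerts (m+1) := by
    rintro rfl; simpa using hX
  have rP5 : x = (0, (2:ℤ)^m + 2^m) → ((x.1, x.2 - 2^m) : Pt) ∈ sierpVerts (m+1) := by
    rintro rfl; simpa using hY
  have rP0 : x = ((0:ℤ), (0:ℤ)) → x ∈ sierpVerts (m+1) := by rintro rfl; exact hO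
  simp only [cA, cB]
  by_cases h1 : x ∈ sierpVerts (m+1) <;>
    by_cases h2 : ((x.1 - 2^m, x.2) : Pt) ∈ sierpVerts (m+1) <;>
    by_cases h3 : ((x.1, x.2 - 2^m) : Pt) ∈ sierpVerts (m+1)
  · exfalso
    have e1 := glueX h1 h2
    have e2 := glueY h1 h3
    rw [e1, Prod.mk.injEq] at e2
    omega
  · -- x = (2^m, 0)
    have e1a : x.1 = (2:ℤ)^m := (Prod.ext_iff.mp (glueX h1 h2)).1
    have e1b : x.2 = 0 := (Prod.ext_iff.mp (glueX h1 h2)).2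
    simp only [h1, h2, h3, mem_verts_succ]
    simp only [if_true, if_false, true_and, and_true, false_and, and_false, true_or,
      or_true, false_or, or_false, not_true, not_false_iff, ite_true, ite_false]
    all_goals (try (simp [Prod.ext_iff, e1a, e1b]))
    all_goals ((try split_ifs) <;> omega)
  · -- x = (0, 2^m)
    have e1a : x.1 = 0 := (Prod.ext_iff.mp (glueY h1 h3)).1
    have e1b : x.2 = (2:ℤ)^m := (Prod.ext_iff.mp (glueY h1 h3)).2
    simp only [h1, h2, h3, mem_verts_succ]
    simp only [if_true, if_false, true_and, and_true, false_and, and_false, true_or,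
      or_true, false_or, or_false, not_true, not_false_iff, ite_true, ite_false]
    all_goals (try (simp [Prod.ext_iff, e1a, e1b]))
    all_goals ((try split_ifs) <;> omega)
  · -- x only in V
    have nP1 : ¬(x.1 = (2:ℤ)^m ∧ x.2 = 0) := fun h => h2 (rP1g (mk _ _ h))
    have nP2 : ¬(x.1 = 0 ∧ x.2 = (2:ℤ)^m) := fun h => h3 (rP2g (mk _ _ h))
    have nP3 : ¬(x.1 = (2:ℤ)^m ∧ x.2 = (2:ℤ)^m) := fun h => h2 (rP3a (mk _ _ h))
    have nP4 : ¬(x.1 = (2:ℤ)^m + 2^m ∧ x.2 = 0) := fun h => h2 (rP4 (mk _ _ h))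
    have nP5 : ¬(x.1 = 0 ∧ x.2 = (2:ℤ)^m + 2^m) := fun h => h3 (rP5 (mk _ _ h))
    simp only [h1, h2, h3, mem_verts_succ]
    simp only [if_true, if_false, true_and, and_true, false_and, and_false, true_or,
      or_true, false_or, or_false, not_true, not_false_iff, ite_true, ite_false]
    all_goals (try (simp [Prod.ext_iff, nP1, nP2, nP3, nP4, nP5]))
    all_goals ((try split_ifs) <;> omega)
  · -- x = (2^m, 2^m)
    have e1a : x.1 = (2:ℤ)^m := (Prod.ext_iff.mp (glueXY h2 h3)).1
    have e1b : x.2 = (2:ℤ)^m := (Prod.ext_iff.mp (glueXY h2 h3)).2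
    simp only [h1, h2, h3, mem_verts_succ]
    simp only [if_true, if_false, true_and, and_true, false_and, and_false, true_or,
      or_true, false_or, or_false, not_true, not_false_iff, ite_true, ite_false]
    all_goals (try (simp [Prod.ext_iff, e1a, e1b]))
    all_goals ((try split_ifs) <;> omega)
  · -- x only in copy 2 (shift X)
    have nP0 : ¬(x.1 = 0 ∧ x.2 = 0) := fun h => h1 (rP0 (mk _ _ h))
    have nP1 : ¬(x.1 = (2:ℤ)^m ∧ x.2 = 0) := fun h => h1 (rP1v (mk _ _ h))
    have nP2 : ¬(x.1 = 0 ∧ x.2 = (2:ℤ)^m) := fun h => h1 (rP2v (mk _ _ h))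
    have nP3 : ¬(x.1 = (2:ℤ)^m ∧ x.2 = (2:ℤ)^m) := fun h => h3 (rP3b (mk _ _ h))
    have nP5 : ¬(x.1 = 0 ∧ x.2 = (2:ℤ)^m + 2^m) := fun h => h3 (rP5 (mk _ _ h))
    simp only [h1, h2, h3, mem_verts_succ]
    simp only [if_true, if_false, true_and, and_true, false_and, and_false, true_or,
      or_true, false_or, or_false, not_true, not_false_iff, ite_true, ite_false]
    all_goals (try (simp [Prod.ext_iff, nP0, nP1, nP2, nP3, nP5]))
    all_goals ((try split_ifs) <;> omega)
  · -- x only in copy 3 (shift Y)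
    have nP0 : ¬(x.1 = 0 ∧ x.2 = 0) := fun h => h1 (rP0 (mk _ _ h))
    have nP1 : ¬(x.1 = (2:ℤ)^m ∧ x.2 = 0) := fun h => h1 (rP1v (mk _ _ h))
    have nP2 : ¬(x.1 = 0 ∧ x.2 = (2:ℤ)^m) := fun h => h1 (rP2v (mk _ _ h))
    have nP3 : ¬(x.1 = (2:ℤ)^m ∧ x.2 = (2:ℤ)^m) := fun h => h2 (rP3a (mk _ _ h))
    have nP4 : ¬(x.1 = (2:ℤ)^m + 2^m ∧ x.2 = 0) := fun h => h2 (rP4 (mk _ _ h))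
    simp only [h1, h2, h3, mem_verts_succ]
    simp only [if_true, if_false, true_and, and_true, false_and, and_false, true_or,
      or_true, false_or, or_false, not_true, not_false_iff, ite_true, ite_false]
    all_goals (try (simp [Prod.ext_iff, nP0, nP1, nP2, nP3, nP4]))
    all_goals ((try split_ifs) <;> omega)
  · -- x nowhere
    have nP0 : ¬(x.1 = 0 ∧ x.2 = 0) := fun h => h1 (rP0 (mk _ _ h))
    have nP1 : ¬(x.1 = (2:ℤ)^m ∧ x.2 = 0) := fun h => h1 (rP1v (mk _ _ h))
    have nP2 : ¬(x.1 = 0 ∧ x.2 = (2:ℤ)^m) := fun h => h1 (rP2v (mk _ _ h))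
    have nP3 : ¬(x.1 = (2:ℤ)^m ∧ x.2 = (2:ℤ)^m) := fun h => h2 (rP3a (mk _ _ h))
    have nP4 : ¬(x.1 = (2:ℤ)^m + 2^m ∧ x.2 = 0) := fun h => h2 (rP4 (mk _ _ h))
    have nP5 : ¬(x.1 = 0 ∧ x.2 = (2:ℤ)^m + 2^m) := fun h => h3 (rP5 (mk _ _ h))
    simp only [h1, h2, h3, mem_verts_succ]
    simp only [if_true, if_false, true_and, and_true, false_and, and_false, true_or,
      or_true, false_or, or_false, not_true, not_false_iff, ite_true, ite_false]
    all_goals (try (simp [Prod.ext_iff, nP0, nP1, nP2, nP3, nP4, nP5]))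
    all_goals ((try split_ifs) <;> omega)

lemma good_succ (m : ℕ) (ih : Good m) : Good (m+1) := by
  obtain ⟨⟨lOX, hOX⟩, ⟨lOY, hOY⟩, ⟨lXY, hXY⟩, ⟨lbOX, hbOX⟩, ⟨lbOY, hbOY⟩, ⟨lbXY, hbXY⟩⟩ := ih
  have hs : (0:ℤ) < 2^m := by positivity
  have hpow : (2:ℤ)^(m+1) = 2^m + 2^m := by ring
  have nOX : ((0:ℤ),(0:ℤ)) ≠ ((2:ℤ)^m, 0) := by intro h; rw [Prod.mk.injEq] at h; omega
  have nOY : ((0:ℤ),(0:ℤ)) ≠ (0, (2:ℤ)^m) := by intro h; rw [Prod.mk.injEq] at h; omega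
  have nXS : ((2:ℤ)^m, (0:ℤ)) ≠ ((2:ℤ)^m, (2:ℤ)^m) := by
    intro h; rw [Prod.mk.injEq] at h; omega
  have nYS : ((0:ℤ), (2:ℤ)^m) ≠ ((2:ℤ)^m, (2:ℤ)^m) := by
    intro h; rw [Prod.mk.injEq] at h; omega
  have nXY : ((2:ℤ)^m, (0:ℤ)) ≠ ((0:ℤ), (2:ℤ)^m) := by
    intro h; rw [Prod.mk.injEq] at h; omega
  have nSX2 : ((2:ℤ)^m, (2:ℤ)^m) ≠ ((2:ℤ)^m + 2^m, 0) := by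
    intro h; rw [Prod.mk.injEq] at h; omega
  have nSY2 : ((2:ℤ)^m, (2:ℤ)^m) ≠ ((0:ℤ), (2:ℤ)^m + 2^m) := by
    intro h; rw [Prod.mk.injEq] at h; omega
  have nXX2 : ((2:ℤ)^m, (0:ℤ)) ≠ ((2:ℤ)^m + 2^m, 0) := by
    intro h; rw [Prod.mk.injEq] at h; omega
  have nYY2 : ((0:ℤ), (2:ℤ)^m) ≠ ((0:ℤ), (2:ℤ)^m + 2^m) := by
    intro h; rw [Prod.mk.injEq] at h; omega
  -- lifted/shifted pieces
  have pOX : HamL (m+2) (0,0) ((2:ℤ)^m,0) (cA (m+1)) lOX := hOX.lift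
  have pOY : HamL (m+2) (0,0) (0,(2:ℤ)^m) (cA (m+1)) lOY := hOY.lift
  have pXY : HamL (m+2) ((2:ℤ)^m,0) (0,(2:ℤ)^m) (cA (m+1)) lXY := hXY.lift
  have pbOX : HamL (m+2) (0,0) ((2:ℤ)^m,0) (cB (m+1) (0,(2:ℤ)^m)) lbOX := hbOX.lift
  have pbOY : HamL (m+2) (0,0) (0,(2:ℤ)^m) (cB (m+1) ((2:ℤ)^m,0)) lbOY := hbOY.lift
  have pbXY : HamL (m+2) ((2:ℤ)^m,0) (0,(2:ℤ)^m) (cB (m+1) (0,0)) lbXY := hbXY.lift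
  -- copy 3 (shift Y) pieces
  have qOX : HamL (m+2) (0,(2:ℤ)^m) ((2:ℤ)^m,(2:ℤ)^m)
      (fun x => cA (m+1) (x.1, x.2 - 2^m)) (lOX.map (fun p => (p.1, p.2 + 2^m))) := by
    simpa using hOX.shiftY
  have qXY : HamL (m+2) ((2:ℤ)^m,(2:ℤ)^m) (0,(2:ℤ)^m + 2^m)
      (fun x => cA (m+1) (x.1, x.2 - 2^m)) (lXY.map (fun p => (p.1, p.2 + 2^m))) := by
    simpa using hXY.shiftY
  have qbOX : HamL (m+2) (0,(2:ℤ)^m) ((2:ℤ)^m,(2:ℤ)^m)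
      (fun x => cB (m+1) (0,(2:ℤ)^m) (x.1, x.2 - 2^m))
      (lbOX.map (fun p => (p.1, p.2 + 2^m))) := by
    simpa using hbOX.shiftY
  have qbOY : HamL (m+2) (0,(2:ℤ)^m) (0,(2:ℤ)^m + 2^m)
      (fun x => cB (m+1) ((2:ℤ)^m,0) (x.1, x.2 - 2^m))
      (lbOY.map (fun p => (p.1, p.2 + 2^m))) := by
    simpa using hbOY.shiftY
  -- copy 2 (shift X) pieces
  have rOX : HamL (m+2) ((2:ℤ)^m,0) ((2:ℤ)^m + 2^m,0)
      (fun x => cA (m+1) (x.1 - 2^m, x.2)) (lOX.map (fun p => (p.1 + 2^m, p.2))) := by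
    simpa using hOX.shiftX
  have rOY : HamL (m+2) ((2:ℤ)^m,0) ((2:ℤ)^m,(2:ℤ)^m)
      (fun x => cA (m+1) (x.1 - 2^m, x.2)) (lOY.map (fun p => (p.1 + 2^m, p.2))) := by
    simpa using hOY.shiftX
  have rXY : HamL (m+2) ((2:ℤ)^m + 2^m,0) ((2:ℤ)^m,(2:ℤ)^m)
      (fun x => cA (m+1) (x.1 - 2^m, x.2)) (lXY.map (fun p => (p.1 + 2^m, p.2))) := by
    simpa using hXY.shiftX
  have rbOY : HamL (m+2) ((2:ℤ)^m,0) ((2:ℤ)^m,(2:ℤ)^m)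
      (fun x => cB (m+1) ((2:ℤ)^m,0) (x.1 - 2^m, x.2))
      (lbOY.map (fun p => (p.1 + 2^m, p.2))) := by
    simpa using hbOY.shiftX
  unfold Good
  rw [hpow]
  refine ⟨?_, ?_, ?_, ?_, ?_, ?_⟩
  · exact ⟨_, pbOY.glue3 qOX rXY.rev nYS nSX2 (fun x => (identities m x).1)⟩
  · exact ⟨_, pbOX.glue3 rOY qXY nXS nSY2 (fun x => (identities m x).2.1)⟩
  · exact ⟨_, (rOX.rev).glue3 pXY qbOY nXY nYY2 (fun x => (identities m x).2.2.1)⟩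
  · exact ⟨_, pbOY.glue3 qbOX rXY.rev nYS nSX2 (fun x => (identities m x).2.2.2.1)⟩
  · exact ⟨_, pbOX.glue3 rbOY qXY nXS nSY2 (fun x => (identities m x).2.2.2.2.1)⟩
  · exact ⟨_, (rOX.rev).glue3 pbXY qbOY nXY nYY2 (fun x => (identities m x).2.2.2.2.2)⟩

lemma good (n : ℕ) : Good n := by
  induction n with
  | zero => exact good_zero
  | succ m ih => exact good_succ m ih

lemma count_map_eq' {α β : Type*} [BEq α] [BEq β] [LawfulBEq α] [LawfulBEq β]
    (f : α → β) (hinj : Function.Injective f) (l : List α) (x : α) :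
    (l.map f).count (f x) = l.count x := by
  induction l with
  | nil => rfl
  | cons a t ih =>
    rw [List.map_cons, List.count_cons, List.count_cons, ih]
    congr 1
    by_cases h : a = x
    · subst h; simp
    · have h2 : f a ≠ f x := fun hh => h (hinj hh)
      simp [beq_iff_eq, h, h2]

lemma buildWalk (n : ℕ) : ∀ (l : List Pt), l.Chain' (E n) →
    (∀ x ∈ l, x ∈ sierpVerts n) →
    ∀ (u v : {p : Pt // p ∈ sierpVerts n}), l.head? = some u.1 → l.getLast? = some v.1 →
    ∃ w : (sierpGraph n).Walk u v, w.support.map Subtype.val = l := by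
  intro l
  induction l with
  | nil => intro _ _ u v hu _; simp at hu
  | cons a t ih =>
    intro hc hm u v hu hv
    simp only [List.head?_cons, Option.some.injEq] at hu
    cases t with
    | nil =>
      simp only [List.getLast?_singleton, Option.some.injEq] at hv
      have huv : u = v := Subtype.ext (by rw [← hu, ← hv])
      subst huv
      exact ⟨SimpleGraph.Walk.nil, by simp [← hu]⟩
    | cons b t2 =>
      have hb : b ∈ sierpVerts n := hm b (by simp)
      unfold List.Chain' at hc; rw [List.isChain_cons_cons] at hc
      have hne : a ≠ b := E_ne hc.1
      have hadj : (sierpGraph n).Adj u ⟨b, hb⟩ := by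
        refine ⟨?_, ?_⟩
        · intro h
          apply hne
          rw [hu, h]
        · show E n u.1 b
          rw [← hu]
          exact hc.1
      obtain ⟨w, hw⟩ := ih hc.2 (fun x hx => hm x (List.mem_cons_of_mem _ hx)) ⟨b, hb⟩ v rfl
        (by rw [← List.getLast?_cons_cons]; exact hv)
      exact ⟨SimpleGraph.Walk.cons hadj w, by simp [hw, ← hu]⟩

lemma exists_ham {n : ℕ} (u v : {p : Pt // p ∈ sierpVerts n}) {l : List Pt}
    (h : HamL n u.1 v.1 (cA n) l) : ∃ p : (sierpGraph n).Walk u v, p.IsHamiltonian := by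
  have hm : ∀ x ∈ l, x ∈ sierpVerts n := by
    intro x hx
    have hcx := h.2.2.2 x
    have h1 : 1 ≤ l.count x := List.one_le_count_iff.mpr hx
    by_contra hxm
    simp [cA, hxm] at hcx
    omega
  obtain ⟨w, hw⟩ := buildWalk n l h.1 hm u v h.2.1 h.2.2.1
  refine ⟨w, fun a => ?_⟩
  have e := count_map_eq' Subtype.val Subtype.val_injective w.support a
  rw [hw, h.2.2.2 a.1] at e
  simp [cA, a.2] at e
  convert e.symm using 2
  exact lawful_beq_subsingleton _ _

end SP

theorem sierp_hamiltonian_path (n : ℕ) (hn : 1 ≤ n)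
    (u v : {p : ℤ × ℤ // p ∈ sierpVerts n})
    (hu : u.1 ∈ sierpCorners n) (hv : v.1 ∈ sierpCorners n) (huv : u ≠ v) :
    ∃ p : (sierpGraph n).Walk u v, p.IsHamiltonian := by
  obtain ⟨k, rfl⟩ : ∃ k, n = k + 1 := ⟨n - 1, by omega⟩
  obtain ⟨⟨lOX, hOX⟩, ⟨lOY, hOY⟩, ⟨lXY, hXY⟩, _, _, _⟩ := SP.good k
  have hk : (k + 1) - 1 = k := by omega
  rw [sierpCorners, hk] at hu hv
  have huv' : u.1 ≠ v.1 := fun h => huv (Subtype.ext h)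
  simp only [Finset.mem_insert, Finset.mem_singleton] at hu hv
  rcases hu with hu | hu | hu <;> rcases hv with hv | hv | hv
  · exact absurd (hu.trans hv.symm) huv'
  · exact SP.exists_ham u v (by rw [hu, hv]; exact hOX)
  · exact SP.exists_ham u v (by rw [hu, hv]; exact hOY)
  · exact SP.exists_ham u v (by rw [hu, hv]; exact hOX.rev)
  · exact absurd (hu.trans hv.symm) huv'
  · exact SP.exists_ham u v (by rw [hu, hv]; exact hXY)
  · exact SP.exists_ham u v (by rw [hu, hv]; exact hOY.rev)
  · exact SP.exists_ham u v (by rw [hu, hv]; exact hXY.rev)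
  · exact absurd (hu.trans hv.symm) huv'
end

section
/- For every vertex v of the Sierpiński gasket graph S_n and every corner vertex a, ∑_{u ∈ V(S_n)} 2^{d(u,v)} ≤ ∑_{u ∈ V(S_n)} 2^{d(u,a)}; i.e., the weighted stacking sum ST(v) = ∑_u 2^{d(u,v)} is maximized at a corner vertex. -/
namespace SierpAux

lemma adj_iff {n : ℕ} {u v : {p : ℤ × ℤ // p ∈ sierpVerts n}} :
    (sierpGraph n).Adj u v ↔ u ≠ v ∧ ((u.1, v.1) ∈ sierpEdges n ∨ (v.1, u.1) ∈ sierpEdges n) :=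
  Iff.rfl

lemma verts_succ_succ (n : ℕ) {p : ℤ × ℤ} :
    p ∈ sierpVerts (n+2) ↔ p ∈ sierpVerts (n+1) ∨
      (p.1 - 2^n, p.2) ∈ sierpVerts (n+1) ∨ (p.1, p.2 - 2^n) ∈ sierpVerts (n+1) := by
  show p ∈ sierpVerts (n+1) ∪ _ ∪ _ ↔ _
  simp only [Finset.mem_union, Finset.mem_image]
  constructor
  · rintro ((h | ⟨q, hq, rfl⟩) | ⟨q, hq, rfl⟩)
    · exact Or.inl h
    · refine Or.inr (Or.inl ?_); simpa using hq
    · refine Or.inr (Or.inr ?_); simpa using hq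
  · rintro (h | h | h)
    · exact Or.inl (Or.inl h)
    · refine Or.inl (Or.inr ⟨_, h, ?_⟩); simp
    · refine Or.inr ⟨_, h, ?_⟩; simp

lemma edges_succ_succ (n : ℕ) {e : (ℤ × ℤ) × (ℤ × ℤ)} :
    e ∈ sierpEdges (n+2) ↔ e ∈ sierpEdges (n+1) ∨
      ((e.1.1 - 2^n, e.1.2), (e.2.1 - 2^n, e.2.2)) ∈ sierpEdges (n+1) ∨
      ((e.1.1, e.1.2 - 2^n), (e.2.1, e.2.2 - 2^n)) ∈ sierpEdges (n+1) := by
  show e ∈ sierpEdges (n+1) ∪ _ ∪ _ ↔ _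
  simp only [Finset.mem_union, Finset.mem_image]
  constructor
  · rintro ((h | ⟨q, hq, rfl⟩) | ⟨q, hq, rfl⟩)
    · exact Or.inl h
    · refine Or.inr (Or.inl ?_); simpa using hq
    · refine Or.inr (Or.inr ?_); simpa using hq
  · rintro (h | h | h)
    · exact Or.inl (Or.inl h)
    · refine Or.inl (Or.inr ⟨_, h, ?_⟩); simp
    · refine Or.inr ⟨_, h, ?_⟩; simp

lemma verts_bounds : ∀ n : ℕ, ∀ p ∈ sierpVerts (n+1),
    0 ≤ p.1 ∧ 0 ≤ p.2 ∧ p.1 + p.2 ≤ 2^n := by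
  intro n
  induction n with
  | zero => decide
  | succ m ih =>
    intro p hp
    rcases (verts_succ_succ m).1 hp with h | h | h
    · have := ih p h
      have : (0:ℤ) < 2^m := by positivity
      have h2 : (2:ℤ)^(m+1) = 2^m + 2^m := by ring
      omega
    · have := ih _ h
      simp only at this
      have h2 : (2:ℤ)^(m+1) = 2^m + 2^m := by ring
      omega
    · have := ih _ h
      simp only at this
      have h2 : (2:ℤ)^(m+1) = 2^m + 2^m := by ring
      omega

lemma edges_spec : ∀ n : ℕ, ∀ e ∈ sierpEdges (n+1),
    e.1 ∈ sierpVerts (n+1) ∧ e.2 ∈ sierpVerts (n+1) ∧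
      ((e.2.1 - e.1.1 = 1 ∧ e.2.2 - e.1.2 = 0) ∨
       (e.2.1 - e.1.1 = 0 ∧ e.2.2 - e.1.2 = 1) ∨
       (e.2.1 - e.1.1 = -1 ∧ e.2.2 - e.1.2 = 1)) := by
  intro n
  induction n with
  | zero => decide
  | succ m ih =>
    intro e he
    rcases (edges_succ_succ m).1 he with h | h | h
    · obtain ⟨h1, h2, h3⟩ := ih e h
      exact ⟨(verts_succ_succ m).2 (Or.inl h1), (verts_succ_succ m).2 (Or.inl h2), h3⟩
    · obtain ⟨h1, h2, h3⟩ := ih _ h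
      refine ⟨(verts_succ_succ m).2 (Or.inr (Or.inl h1)), (verts_succ_succ m).2 (Or.inr (Or.inl h2)), ?_⟩
      simpa using h3
    · obtain ⟨h1, h2, h3⟩ := ih _ h
      refine ⟨(verts_succ_succ m).2 (Or.inr (Or.inr h1)), (verts_succ_succ m).2 (Or.inr (Or.inr h2)), ?_⟩
      simpa using h3

lemma cornerA_mem (n : ℕ) : ((0,0) : ℤ × ℤ) ∈ sierpVerts (n+1) := by
  induction n with
  | zero => decide
  | succ m ih => exact (verts_succ_succ m).2 (Or.inl ih)

lemma cornerB_mem (n : ℕ) : ((2^n,0) : ℤ × ℤ) ∈ sierpVerts (n+1) := by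
  induction n with
  | zero => decide
  | succ m ih =>
    refine (verts_succ_succ m).2 (Or.inr (Or.inl ?_))
    simpa [show (2:ℤ)^(m+1) - 2^m = 2^m by ring] using ih

lemma cornerC_mem (n : ℕ) : ((0,2^n) : ℤ × ℤ) ∈ sierpVerts (n+1) := by
  induction n with
  | zero => decide
  | succ m ih =>
    refine (verts_succ_succ m).2 (Or.inr (Or.inr ?_))
    simpa [show (2:ℤ)^(m+1) - 2^m = 2^m by ring] using ih

lemma mem0 {n : ℕ} {p : ℤ × ℤ} (h : p ∈ sierpVerts (n+1)) : p ∈ sierpVerts (n+2) :=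
  (verts_succ_succ n).2 (Or.inl h)

lemma mem1 {n : ℕ} {p : ℤ × ℤ} (h : p ∈ sierpVerts (n+1)) :
    ((p.1 + 2^n, p.2) : ℤ × ℤ) ∈ sierpVerts (n+2) := by
  refine (verts_succ_succ n).2 (Or.inr (Or.inl ?_)); simpa using h

lemma mem2 {n : ℕ} {p : ℤ × ℤ} (h : p ∈ sierpVerts (n+1)) :
    ((p.1, p.2 + 2^n) : ℤ × ℤ) ∈ sierpVerts (n+2) := by
  refine (verts_succ_succ n).2 (Or.inr (Or.inr ?_)); simpa using h

end SierpAux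

namespace SierpAux

lemma edge0 {n : ℕ} {e : (ℤ × ℤ) × (ℤ × ℤ)} (h : e ∈ sierpEdges (n+1)) :
    e ∈ sierpEdges (n+2) := (edges_succ_succ n).2 (Or.inl h)

lemma edge1 {n : ℕ} {e : (ℤ × ℤ) × (ℤ × ℤ)} (h : e ∈ sierpEdges (n+1)) :
    (((e.1.1 + 2^n, e.1.2), (e.2.1 + 2^n, e.2.2)) : (ℤ×ℤ)×(ℤ×ℤ)) ∈ sierpEdges (n+2) := by
  refine (edges_succ_succ n).2 (Or.inr (Or.inl ?_)); simpa using h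

lemma edge2 {n : ℕ} {e : (ℤ × ℤ) × (ℤ × ℤ)} (h : e ∈ sierpEdges (n+1)) :
    (((e.1.1, e.1.2 + 2^n), (e.2.1, e.2.2 + 2^n)) : (ℤ×ℤ)×(ℤ×ℤ)) ∈ sierpEdges (n+2) := by
  refine (edges_succ_succ n).2 (Or.inr (Or.inr ?_)); simpa using h

def hom0 (n : ℕ) : sierpGraph (n+1) →g sierpGraph (n+2) where
  toFun := fun u => ⟨u.1, mem0 u.2⟩
  map_rel' := by
    rintro u v hadj
    obtain ⟨h1, h2⟩ := adj_iff.1 hadj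
    refine adj_iff.2 ⟨fun e => h1 (Subtype.ext (congrArg (fun z : {p : ℤ × ℤ // p ∈ sierpVerts (n+2)} => z.1) e)), ?_⟩
    rcases h2 with h | h
    · exact Or.inl (edge0 h)
    · exact Or.inr (edge0 h)

def hom1 (n : ℕ) : sierpGraph (n+1) →g sierpGraph (n+2) where
  toFun := fun u => ⟨(u.1.1 + 2^n, u.1.2), mem1 u.2⟩
  map_rel' := by
    rintro u v hadj
    obtain ⟨h1, h2⟩ := adj_iff.1 hadj
    have hne : u.1 ≠ v.1 := fun e => h1 (Subtype.ext e)
    refine adj_iff.2 ⟨?_, ?_⟩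
    · simp only [ne_eq, Subtype.mk.injEq, Prod.mk.injEq]
      intro ⟨ha, hb⟩
      exact hne (Prod.ext (by omega) hb)
    · rcases h2 with h | h
      · exact Or.inl (edge1 h)
      · exact Or.inr (edge1 h)

def hom2 (n : ℕ) : sierpGraph (n+1) →g sierpGraph (n+2) where
  toFun := fun u => ⟨(u.1.1, u.1.2 + 2^n), mem2 u.2⟩
  map_rel' := by
    rintro u v hadj
    obtain ⟨h1, h2⟩ := adj_iff.1 hadj
    have hne : u.1 ≠ v.1 := fun e => h1 (Subtype.ext e)
    refine adj_iff.2 ⟨?_, ?_⟩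
    · simp only [ne_eq, Subtype.mk.injEq, Prod.mk.injEq]
      intro ⟨ha, hb⟩
      exact hne (Prod.ext ha (by omega))
    · rcases h2 with h | h
      · exact Or.inl (edge2 h)
      · exact Or.inr (edge2 h)

lemma adj1 : ∀ u v : {p : ℤ × ℤ // p ∈ sierpVerts 1}, u ≠ v → (sierpGraph 1).Adj u v := by
  decide

lemma connected : ∀ n : ℕ, (sierpGraph (n+1)).Connected := by
  intro n
  induction n with
  | zero =>
    rw [SimpleGraph.connected_iff]
    refine ⟨fun u v => ?_, ⟨⟨(0,0), cornerA_mem 0⟩⟩⟩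
    by_cases h : u = v
    · exact h ▸ SimpleGraph.Reachable.refl u
    · exact (adj1 u v h).reachable
  | succ m ih =>
    rw [SimpleGraph.connected_iff]
    refine ⟨fun u v => ?_, ⟨⟨(0,0), cornerA_mem (m+1)⟩⟩⟩
    have key : ∀ w : {p : ℤ × ℤ // p ∈ sierpVerts (m+2)},
        (sierpGraph (m+2)).Reachable w ⟨(0,0), cornerA_mem (m+1)⟩ := by
      intro w
      have hB : (sierpGraph (m+2)).Reachable ⟨(2^m,0), mem0 (cornerB_mem m)⟩ ⟨(0,0), cornerA_mem (m+1)⟩ := by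
        have := (ih.preconnected ⟨(2^m,0), cornerB_mem m⟩ ⟨(0,0), cornerA_mem m⟩).map (hom0 m)
        exact this
      have hC : (sierpGraph (m+2)).Reachable ⟨(0,2^m), mem0 (cornerC_mem m)⟩ ⟨(0,0), cornerA_mem (m+1)⟩ := by
        exact (ih.preconnected ⟨(0,2^m), cornerC_mem m⟩ ⟨(0,0), cornerA_mem m⟩).map (hom0 m)
      rcases (verts_succ_succ m).1 w.2 with h | h | h
      · exact (ih.preconnected ⟨w.1, h⟩ ⟨(0,0), cornerA_mem m⟩).map (hom0 m)
      · have h1 : (sierpGraph (m+2)).Reachable w ⟨(2^m,0), mem0 (cornerB_mem m)⟩ := by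
          have := (ih.preconnected ⟨(w.1.1 - 2^m, w.1.2), h⟩ ⟨(0,0), cornerA_mem m⟩).map (hom1 m)
          have e1 : (hom1 m) ⟨(w.1.1 - 2^m, w.1.2), h⟩ = w := Subtype.ext (by
            show ((w.1.1 - 2^m + 2^m, w.1.2) : ℤ×ℤ) = w.1; simp)
          have e2 : (hom1 m) ⟨(0,0), cornerA_mem m⟩ = ⟨(2^m,0), mem0 (cornerB_mem m)⟩ := Subtype.ext (by
            show ((0 + 2^m, 0) : ℤ×ℤ) = (2^m, 0); simp)
          rwa [e1, e2] at this
        exact h1.trans hB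
      · have h1 : (sierpGraph (m+2)).Reachable w ⟨(0,2^m), mem0 (cornerC_mem m)⟩ := by
          have := (ih.preconnected ⟨(w.1.1, w.1.2 - 2^m), h⟩ ⟨(0,0), cornerA_mem m⟩).map (hom2 m)
          have e1 : (hom2 m) ⟨(w.1.1, w.1.2 - 2^m), h⟩ = w := Subtype.ext (by
            show ((w.1.1, w.1.2 - 2^m + 2^m) : ℤ×ℤ) = w.1; simp)
          have e2 : (hom2 m) ⟨(0,0), cornerA_mem m⟩ = ⟨(0,2^m), mem0 (cornerC_mem m)⟩ := Subtype.ext (by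
            show ((0, 0 + 2^m) : ℤ×ℤ) = (0, 2^m); simp)
          rwa [e1, e2] at this
        exact h1.trans hC
    exact (key u).trans (key v).symm

lemma walk_lip {V : Type*} {G : SimpleGraph V} (φ : V → ℤ)
    (h : ∀ u v, G.Adj u v → |φ u - φ v| ≤ 1) {u v : V} (p : G.Walk u v) :
    |φ u - φ v| ≤ (p.length : ℤ) := by
  induction p with
  | nil => simp
  | cons ha p ih =>
    rename_i a b c
    calc |φ a - φ c| ≤ |φ a - φ b| + |φ b - φ c| := abs_sub_le _ _ _
    _ ≤ 1 + p.length := add_le_add (h _ _ ha) ih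
    _ = ((p.length + 1 : ℕ) : ℤ) := by push_cast; ring
    _ ≤ _ := by simp [SimpleGraph.Walk.length_cons]

lemma dist_lip {V : Type*} {G : SimpleGraph V} (φ : V → ℤ)
    (h : ∀ u v, G.Adj u v → |φ u - φ v| ≤ 1) {u v : V} (hr : G.Reachable u v) :
    |φ u - φ v| ≤ (G.dist u v : ℤ) := by
  obtain ⟨p, hp⟩ := hr.exists_walk_length_eq_dist
  simpa [hp] using walk_lip φ h p

lemma dist_hom_le {V V' : Type*} {G : SimpleGraph V} {G' : SimpleGraph V'}
    (f : G →g G') {u v : V} (hr : G.Reachable u v) :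
    G'.dist (f u) (f v) ≤ G.dist u v := by
  obtain ⟨p, hp⟩ := hr.exists_walk_length_eq_dist
  calc G'.dist (f u) (f v) ≤ (p.map f).length := SimpleGraph.dist_le _
  _ = p.length := SimpleGraph.Walk.length_map f p
  _ = G.dist u v := hp

lemma adj_coords {n : ℕ} {u v : {p : ℤ × ℤ // p ∈ sierpVerts (n+1)}}
    (h : (sierpGraph (n+1)).Adj u v) :
    |u.1.1 - v.1.1| ≤ 1 ∧ |u.1.2 - v.1.2| ≤ 1 ∧ |u.1.1 + u.1.2 - (v.1.1 + v.1.2)| ≤ 1 := by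
  rcases (adj_iff.1 h).2 with h2 | h2 <;>
  · obtain ⟨-, -, h3⟩ := edges_spec n _ h2
    simp only at h3
    refine ⟨?_, ?_, ?_⟩ <;> rw [abs_le] <;> omega

end SierpAux
namespace SierpAux

lemma dist_congr {n : ℕ} {u v u' v' : {p : ℤ × ℤ // p ∈ sierpVerts n}}
    (hu : u.1 = u'.1) (hv : v.1 = v'.1) :
    (sierpGraph n).dist u v = (sierpGraph n).dist u' v' := by
  rw [Subtype.ext hu, Subtype.ext hv]

lemma dist0_le (n : ℕ) (u v : {p : ℤ × ℤ // p ∈ sierpVerts (n+1)}) :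
    (sierpGraph (n+2)).dist ⟨u.1, mem0 u.2⟩ ⟨v.1, mem0 v.2⟩ ≤ (sierpGraph (n+1)).dist u v :=
  dist_hom_le (hom0 n) ((connected n).preconnected u v)

lemma dist1_le (n : ℕ) (u v : {p : ℤ × ℤ // p ∈ sierpVerts (n+1)}) :
    (sierpGraph (n+2)).dist ⟨(u.1.1 + 2^n, u.1.2), mem1 u.2⟩ ⟨(v.1.1 + 2^n, v.1.2), mem1 v.2⟩ ≤
      (sierpGraph (n+1)).dist u v :=
  dist_hom_le (hom1 n) ((connected n).preconnected u v)

lemma dist2_le (n : ℕ) (u v : {p : ℤ × ℤ // p ∈ sierpVerts (n+1)}) :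
    (sierpGraph (n+2)).dist ⟨(u.1.1, u.1.2 + 2^n), mem2 u.2⟩ ⟨(v.1.1, v.1.2 + 2^n), mem2 v.2⟩ ≤
      (sierpGraph (n+1)).dist u v :=
  dist_hom_le (hom2 n) ((connected n).preconnected u v)

lemma dist0_le' (n : ℕ) (p q : ℤ × ℤ) (hp : p ∈ sierpVerts (n+1)) (hq : q ∈ sierpVerts (n+1)) :
    (sierpGraph (n+2)).dist ⟨p, mem0 hp⟩ ⟨q, mem0 hq⟩ ≤ (sierpGraph (n+1)).dist ⟨p, hp⟩ ⟨q, hq⟩ :=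
  dist0_le n ⟨p, hp⟩ ⟨q, hq⟩

lemma dist1_le' (n : ℕ) (p q : ℤ × ℤ) (hp : p ∈ sierpVerts (n+1)) (hq : q ∈ sierpVerts (n+1)) :
    (sierpGraph (n+2)).dist ⟨(p.1 + 2^n, p.2), mem1 hp⟩ ⟨(q.1 + 2^n, q.2), mem1 hq⟩ ≤
      (sierpGraph (n+1)).dist ⟨p, hp⟩ ⟨q, hq⟩ :=
  dist1_le n ⟨p, hp⟩ ⟨q, hq⟩

lemma dist2_le' (n : ℕ) (p q : ℤ × ℤ) (hp : p ∈ sierpVerts (n+1)) (hq : q ∈ sierpVerts (n+1)) :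
    (sierpGraph (n+2)).dist ⟨(p.1, p.2 + 2^n), mem2 hp⟩ ⟨(q.1, q.2 + 2^n), mem2 hq⟩ ≤
      (sierpGraph (n+1)).dist ⟨p, hp⟩ ⟨q, hq⟩ :=
  dist2_le n ⟨p, hp⟩ ⟨q, hq⟩

lemma cornerZ_mem (n : ℕ) : ((2^n, 2^n) : ℤ × ℤ) ∈ sierpVerts (n+2) := by
  have := mem1 (cornerC_mem n); simpa using this

lemma dist_adj_lip {V : Type*} {G : SimpleGraph V} (hc : G.Connected) {u v w : V}
    (h : G.Adj u v) : |(G.dist w u : ℤ) - (G.dist w v : ℤ)| ≤ 1 := by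
  have h1 : G.dist w v ≤ G.dist w u + G.dist u v := hc.dist_triangle
  have h2 : G.dist w u ≤ G.dist w v + G.dist v u := hc.dist_triangle
  have e1 : G.dist u v = 1 := SimpleGraph.dist_eq_one_iff_adj.2 h
  have e2 : G.dist v u = 1 := SimpleGraph.dist_eq_one_iff_adj.2 h.symm
  rw [abs_le]
  omega

lemma ecc_bound : ∀ n : ℕ, ∀ u : {p : ℤ × ℤ // p ∈ sierpVerts (n+1)},
    (sierpGraph (n+1)).dist u ⟨(0,0), cornerA_mem n⟩ ≤ 2^n ∧
    (sierpGraph (n+1)).dist u ⟨(2^n,0), cornerB_mem n⟩ ≤ 2^n ∧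
    (sierpGraph (n+1)).dist u ⟨(0,2^n), cornerC_mem n⟩ ≤ 2^n := by
  intro n
  induction n with
  | zero =>
    intro u
    have key : ∀ w : {p : ℤ × ℤ // p ∈ sierpVerts 1}, (sierpGraph 1).dist u w ≤ 2^0 := by
      intro w
      by_cases h : u = w
      · rw [h, SimpleGraph.dist_self]; norm_num
      · rw [SimpleGraph.dist_eq_one_iff_adj.2 (adj1 _ _ h)]; norm_num
    exact ⟨key _, key _, key _⟩
  | succ m ih =>
    intro u
    have tri : ∀ a b c : {p : ℤ × ℤ // p ∈ sierpVerts (m+2)},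
        (sierpGraph (m+2)).dist a c ≤ (sierpGraph (m+2)).dist a b + (sierpGraph (m+2)).dist b c :=
      fun a b c => (connected (m+1)).dist_triangle
    rcases (verts_succ_succ m).1 u.2 with h | h | h
    · -- copy0
      refine ⟨?_, ?_, ?_⟩
      · calc (sierpGraph (m+2)).dist u ⟨(0,0), cornerA_mem (m+1)⟩
            = (sierpGraph (m+2)).dist ⟨u.1, mem0 h⟩ ⟨(0,0), mem0 (cornerA_mem m)⟩ :=
              dist_congr rfl rfl
          _ ≤ (sierpGraph (m+1)).dist ⟨u.1, h⟩ ⟨(0,0), cornerA_mem m⟩ :=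
              dist0_le' m u.1 (0,0) h (cornerA_mem m)
          _ ≤ 2^m := (ih _).1
          _ ≤ 2^(m+1) := by rw [pow_succ]; omega
      · -- to B via x
        calc (sierpGraph (m+2)).dist u ⟨(2^(m+1),0), cornerB_mem (m+1)⟩
            ≤ (sierpGraph (m+2)).dist u ⟨(2^m,0), mem0 (cornerB_mem m)⟩ +
              (sierpGraph (m+2)).dist ⟨(2^m,0), mem0 (cornerB_mem m)⟩ ⟨(2^(m+1),0), cornerB_mem (m+1)⟩ := tri _ _ _
          _ ≤ 2^m + 2^m := by
              gcongr
              · calc (sierpGraph (m+2)).dist u ⟨(2^m,0), mem0 (cornerB_mem m)⟩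
                    = (sierpGraph (m+2)).dist ⟨u.1, mem0 h⟩ ⟨(2^m,0), mem0 (cornerB_mem m)⟩ :=
                      dist_congr rfl rfl
                  _ ≤ (sierpGraph (m+1)).dist ⟨u.1, h⟩ ⟨(2^m,0), cornerB_mem m⟩ :=
                      dist0_le' m u.1 (2^m,0) h (cornerB_mem m)
                  _ ≤ 2^m := (ih _).2.1
              · calc (sierpGraph (m+2)).dist ⟨(2^m,0), mem0 (cornerB_mem m)⟩ ⟨(2^(m+1),0), cornerB_mem (m+1)⟩
                    = (sierpGraph (m+2)).dist ⟨((0:ℤ) + 2^m, (0:ℤ)), mem1 (cornerA_mem m)⟩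
                        ⟨((2^m:ℤ) + 2^m, (0:ℤ)), mem1 (cornerB_mem m)⟩ :=
                      dist_congr (by simp) (by simp; ring)
                  _ ≤ (sierpGraph (m+1)).dist ⟨(0,0), cornerA_mem m⟩ ⟨(2^m,0), cornerB_mem m⟩ :=
                      dist1_le' m (0,0) (2^m,0) (cornerA_mem m) (cornerB_mem m)
                  _ ≤ 2^m := (ih _).2.1
          _ ≤ 2^(m+1) := by rw [pow_succ]; omega
      · calc (sierpGraph (m+2)).dist u ⟨(0,2^(m+1)), cornerC_mem (m+1)⟩
            ≤ (sierpGraph (m+2)).dist u ⟨(0,2^m), mem0 (cornerC_mem m)⟩ +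
              (sierpGraph (m+2)).dist ⟨(0,2^m), mem0 (cornerC_mem m)⟩ ⟨(0,2^(m+1)), cornerC_mem (m+1)⟩ := tri _ _ _
          _ ≤ 2^m + 2^m := by
              gcongr
              · calc (sierpGraph (m+2)).dist u ⟨(0,2^m), mem0 (cornerC_mem m)⟩
                    = (sierpGraph (m+2)).dist ⟨u.1, mem0 h⟩ ⟨(0,2^m), mem0 (cornerC_mem m)⟩ :=
                      dist_congr rfl rfl
                  _ ≤ (sierpGraph (m+1)).dist ⟨u.1, h⟩ ⟨(0,2^m), cornerC_mem m⟩ :=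
                      dist0_le' m u.1 (0,2^m) h (cornerC_mem m)
                  _ ≤ 2^m := (ih _).2.2
              · calc (sierpGraph (m+2)).dist ⟨(0,2^m), mem0 (cornerC_mem m)⟩ ⟨(0,2^(m+1)), cornerC_mem (m+1)⟩
                    = (sierpGraph (m+2)).dist ⟨((0:ℤ), (0:ℤ) + 2^m), mem2 (cornerA_mem m)⟩
                        ⟨((0:ℤ), (2^m:ℤ) + 2^m), mem2 (cornerC_mem m)⟩ :=
                      dist_congr (by simp) (by simp; ring)
                  _ ≤ (sierpGraph (m+1)).dist ⟨(0,0), cornerA_mem m⟩ ⟨(0,2^m), cornerC_mem m⟩ :=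
                      dist2_le' m (0,0) (0,2^m) (cornerA_mem m) (cornerC_mem m)
                  _ ≤ 2^m := (ih _).2.2
          _ ≤ 2^(m+1) := by rw [pow_succ]; omega
    · -- copy1 : û = ⟨(u.1.1 - 2^m, u.1.2), h⟩
      have hu1 : u.1 = ((u.1.1 - 2^m) + 2^m, u.1.2) := by simp
      refine ⟨?_, ?_, ?_⟩
      · calc (sierpGraph (m+2)).dist u ⟨(0,0), cornerA_mem (m+1)⟩
            ≤ (sierpGraph (m+2)).dist u ⟨(2^m,0), mem0 (cornerB_mem m)⟩ +
              (sierpGraph (m+2)).dist ⟨(2^m,0), mem0 (cornerB_mem m)⟩ ⟨(0,0), cornerA_mem (m+1)⟩ := tri _ _ _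
          _ ≤ 2^m + 2^m := by
              gcongr
              · calc (sierpGraph (m+2)).dist u ⟨(2^m,0), mem0 (cornerB_mem m)⟩
                    = (sierpGraph (m+2)).dist ⟨((u.1.1 - 2^m) + 2^m, u.1.2), mem1 h⟩
                        ⟨((0:ℤ) + 2^m, (0:ℤ)), mem1 (cornerA_mem m)⟩ :=
                      dist_congr hu1 (by simp)
                  _ ≤ (sierpGraph (m+1)).dist ⟨(u.1.1 - 2^m, u.1.2), h⟩ ⟨(0,0), cornerA_mem m⟩ :=
                      dist1_le' m (u.1.1 - 2^m, u.1.2) (0,0) h (cornerA_mem m)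
                  _ ≤ 2^m := (ih _).1
              · calc (sierpGraph (m+2)).dist ⟨(2^m,0), mem0 (cornerB_mem m)⟩ ⟨(0,0), cornerA_mem (m+1)⟩
                    = (sierpGraph (m+2)).dist ⟨(2^m,0), mem0 (cornerB_mem m)⟩ ⟨(0,0), mem0 (cornerA_mem m)⟩ :=
                      dist_congr rfl rfl
                  _ ≤ (sierpGraph (m+1)).dist ⟨(2^m,0), cornerB_mem m⟩ ⟨(0,0), cornerA_mem m⟩ :=
                      dist0_le' m (2^m,0) (0,0) (cornerB_mem m) (cornerA_mem m)
                  _ ≤ 2^m := (ih _).1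
          _ ≤ 2^(m+1) := by rw [pow_succ]; omega
      · calc (sierpGraph (m+2)).dist u ⟨(2^(m+1),0), cornerB_mem (m+1)⟩
            = (sierpGraph (m+2)).dist ⟨((u.1.1 - 2^m) + 2^m, u.1.2), mem1 h⟩
                ⟨((2^m:ℤ) + 2^m, (0:ℤ)), mem1 (cornerB_mem m)⟩ :=
              dist_congr hu1 (by simp; ring)
          _ ≤ (sierpGraph (m+1)).dist ⟨(u.1.1 - 2^m, u.1.2), h⟩ ⟨(2^m,0), cornerB_mem m⟩ :=
              dist1_le' m (u.1.1 - 2^m, u.1.2) (2^m,0) h (cornerB_mem m)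
          _ ≤ 2^m := (ih _).2.1
          _ ≤ 2^(m+1) := by rw [pow_succ]; omega
      · calc (sierpGraph (m+2)).dist u ⟨(0,2^(m+1)), cornerC_mem (m+1)⟩
            ≤ (sierpGraph (m+2)).dist u ⟨(2^m,2^m), cornerZ_mem m⟩ +
              (sierpGraph (m+2)).dist ⟨(2^m,2^m), cornerZ_mem m⟩ ⟨(0,2^(m+1)), cornerC_mem (m+1)⟩ := by
              have := tri u ⟨((0:ℤ)+2^m, (2^m:ℤ)), mem1 (cornerC_mem m)⟩
                ⟨(0,2^(m+1)), cornerC_mem (m+1)⟩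
              calc (sierpGraph (m+2)).dist u ⟨(0,2^(m+1)), cornerC_mem (m+1)⟩ ≤ _ := this
                _ = _ := by
                    congr 1
                    · exact dist_congr rfl (by simp)
                    · exact dist_congr (by simp) rfl
          _ ≤ 2^m + 2^m := by
              gcongr
              · calc (sierpGraph (m+2)).dist u ⟨(2^m,2^m), cornerZ_mem m⟩
                    = (sierpGraph (m+2)).dist ⟨((u.1.1 - 2^m) + 2^m, u.1.2), mem1 h⟩
                        ⟨((0:ℤ) + 2^m, (2^m:ℤ)), mem1 (cornerC_mem m)⟩ :=
                      dist_congr hu1 (by simp)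
                  _ ≤ (sierpGraph (m+1)).dist ⟨(u.1.1 - 2^m, u.1.2), h⟩ ⟨(0,2^m), cornerC_mem m⟩ :=
                      dist1_le' m (u.1.1 - 2^m, u.1.2) (0,2^m) h (cornerC_mem m)
                  _ ≤ 2^m := (ih _).2.2
              · calc (sierpGraph (m+2)).dist ⟨(2^m,2^m), cornerZ_mem m⟩ ⟨(0,2^(m+1)), cornerC_mem (m+1)⟩
                    = (sierpGraph (m+2)).dist ⟨((2^m:ℤ), (0:ℤ) + 2^m), mem2 (cornerB_mem m)⟩
                        ⟨((0:ℤ), (2^m:ℤ) + 2^m), mem2 (cornerC_mem m)⟩ :=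
                      dist_congr (by simp) (by simp; ring)
                  _ ≤ (sierpGraph (m+1)).dist ⟨(2^m,0), cornerB_mem m⟩ ⟨(0,2^m), cornerC_mem m⟩ :=
                      dist2_le' m (2^m,0) (0,2^m) (cornerB_mem m) (cornerC_mem m)
                  _ ≤ 2^m := (ih _).2.2
          _ ≤ 2^(m+1) := by rw [pow_succ]; omega
    · -- copy2 : û = ⟨(u.1.1, u.1.2 - 2^m), h⟩
      have hu1 : u.1 = (u.1.1, (u.1.2 - 2^m) + 2^m) := by simp
      refine ⟨?_, ?_, ?_⟩
      · calc (sierpGraph (m+2)).dist u ⟨(0,0), cornerA_mem (m+1)⟩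
            ≤ (sierpGraph (m+2)).dist u ⟨(0,2^m), mem0 (cornerC_mem m)⟩ +
              (sierpGraph (m+2)).dist ⟨(0,2^m), mem0 (cornerC_mem m)⟩ ⟨(0,0), cornerA_mem (m+1)⟩ := tri _ _ _
          _ ≤ 2^m + 2^m := by
              gcongr
              · calc (sierpGraph (m+2)).dist u ⟨(0,2^m), mem0 (cornerC_mem m)⟩
                    = (sierpGraph (m+2)).dist ⟨(u.1.1, (u.1.2 - 2^m) + 2^m), mem2 h⟩
                        ⟨((0:ℤ), (0:ℤ) + 2^m), mem2 (cornerA_mem m)⟩ :=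
                      dist_congr hu1 (by simp)
                  _ ≤ (sierpGraph (m+1)).dist ⟨(u.1.1, u.1.2 - 2^m), h⟩ ⟨(0,0), cornerA_mem m⟩ :=
                      dist2_le' m (u.1.1, u.1.2 - 2^m) (0,0) h (cornerA_mem m)
                  _ ≤ 2^m := (ih _).1
              · calc (sierpGraph (m+2)).dist ⟨(0,2^m), mem0 (cornerC_mem m)⟩ ⟨(0,0), cornerA_mem (m+1)⟩
                    = (sierpGraph (m+2)).dist ⟨(0,2^m), mem0 (cornerC_mem m)⟩ ⟨(0,0), mem0 (cornerA_mem m)⟩ :=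
                      dist_congr rfl rfl
                  _ ≤ (sierpGraph (m+1)).dist ⟨(0,2^m), cornerC_mem m⟩ ⟨(0,0), cornerA_mem m⟩ :=
                      dist0_le' m (0,2^m) (0,0) (cornerC_mem m) (cornerA_mem m)
                  _ ≤ 2^m := (ih _).1
          _ ≤ 2^(m+1) := by rw [pow_succ]; omega
      · calc (sierpGraph (m+2)).dist u ⟨(2^(m+1),0), cornerB_mem (m+1)⟩
            ≤ (sierpGraph (m+2)).dist u ⟨(2^m,2^m), cornerZ_mem m⟩ +
              (sierpGraph (m+2)).dist ⟨(2^m,2^m), cornerZ_mem m⟩ ⟨(2^(m+1),0), cornerB_mem (m+1)⟩ := by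
              have := tri u ⟨((2^m:ℤ), (0:ℤ)+2^m), mem2 (cornerB_mem m)⟩
                ⟨(2^(m+1),0), cornerB_mem (m+1)⟩
              calc (sierpGraph (m+2)).dist u ⟨(2^(m+1),0), cornerB_mem (m+1)⟩ ≤ _ := this
                _ = _ := by
                    congr 1
                    · exact dist_congr rfl (by simp)
                    · exact dist_congr (by simp) rfl
          _ ≤ 2^m + 2^m := by
              gcongr
              · calc (sierpGraph (m+2)).dist u ⟨(2^m,2^m), cornerZ_mem m⟩
                    = (sierpGraph (m+2)).dist ⟨(u.1.1, (u.1.2 - 2^m) + 2^m), mem2 h⟩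
                        ⟨((2^m:ℤ), (0:ℤ) + 2^m), mem2 (cornerB_mem m)⟩ :=
                      dist_congr hu1 (by simp)
                  _ ≤ (sierpGraph (m+1)).dist ⟨(u.1.1, u.1.2 - 2^m), h⟩ ⟨(2^m,0), cornerB_mem m⟩ :=
                      dist2_le' m (u.1.1, u.1.2 - 2^m) (2^m,0) h (cornerB_mem m)
                  _ ≤ 2^m := (ih _).2.1
              · calc (sierpGraph (m+2)).dist ⟨(2^m,2^m), cornerZ_mem m⟩ ⟨(2^(m+1),0), cornerB_mem (m+1)⟩
                    = (sierpGraph (m+2)).dist ⟨((0:ℤ) + 2^m, (2^m:ℤ)), mem1 (cornerC_mem m)⟩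
                        ⟨((2^m:ℤ) + 2^m, (0:ℤ)), mem1 (cornerB_mem m)⟩ :=
                      dist_congr (by simp) (by simp; ring)
                  _ ≤ (sierpGraph (m+1)).dist ⟨(0,2^m), cornerC_mem m⟩ ⟨(2^m,0), cornerB_mem m⟩ :=
                      dist1_le' m (0,2^m) (2^m,0) (cornerC_mem m) (cornerB_mem m)
                  _ ≤ 2^m := (ih _).2.1
          _ ≤ 2^(m+1) := by rw [pow_succ]; omega
      · calc (sierpGraph (m+2)).dist u ⟨(0,2^(m+1)), cornerC_mem (m+1)⟩
            = (sierpGraph (m+2)).dist ⟨(u.1.1, (u.1.2 - 2^m) + 2^m), mem2 h⟩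
                ⟨((0:ℤ), (2^m:ℤ) + 2^m), mem2 (cornerC_mem m)⟩ :=
              dist_congr hu1 (by simp; ring)
          _ ≤ (sierpGraph (m+1)).dist ⟨(u.1.1, u.1.2 - 2^m), h⟩ ⟨(0,2^m), cornerC_mem m⟩ :=
              dist2_le' m (u.1.1, u.1.2 - 2^m) (0,2^m) h (cornerC_mem m)
          _ ≤ 2^m := (ih _).2.2
          _ ≤ 2^(m+1) := by rw [pow_succ]; omega

lemma corner_dist_AB (n : ℕ) :
    (sierpGraph (n+1)).dist ⟨(0,0), cornerA_mem n⟩ ⟨(2^n,0), cornerB_mem n⟩ = 2^n := by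
  refine le_antisymm ?_ ?_
  · rw [SimpleGraph.dist_comm]; exact (ecc_bound n _).1
  · have := dist_lip (G := sierpGraph (n+1)) (fun u => u.1.1)
      (fun u v h => (adj_coords h).1)
      ((connected n).preconnected ⟨(0,0), cornerA_mem n⟩ ⟨(2^n,0), cornerB_mem n⟩)
    simp only at this
    rw [show |(0:ℤ) - 2^n| = 2^n by rw [abs_sub_comm]; simp] at this
    exact_mod_cast this

lemma corner_dist_AC (n : ℕ) :
    (sierpGraph (n+1)).dist ⟨(0,0), cornerA_mem n⟩ ⟨(0,2^n), cornerC_mem n⟩ = 2^n := by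
  refine le_antisymm ?_ ?_
  · rw [SimpleGraph.dist_comm]; exact (ecc_bound n _).1
  · have := dist_lip (G := sierpGraph (n+1)) (fun u => u.1.2)
      (fun u v h => (adj_coords h).2.1)
      ((connected n).preconnected ⟨(0,0), cornerA_mem n⟩ ⟨(0,2^n), cornerC_mem n⟩)
    simp only at this
    rw [show |(0:ℤ) - 2^n| = 2^n by rw [abs_sub_comm]; simp] at this
    exact_mod_cast this

end SierpAux
namespace SierpAux

lemma inter01 {n : ℕ} {p : ℤ × ℤ} (h0 : p ∈ sierpVerts (n+1))
    (h1 : (p.1 - 2^n, p.2) ∈ sierpVerts (n+1)) : p = (2^n, 0) := by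
  obtain ⟨a1, a2, a3⟩ := verts_bounds n p h0
  obtain ⟨b1, b2, b3⟩ := verts_bounds n _ h1
  simp only at b1 b2 b3
  have h2 : (0:ℤ) < 2^n := by positivity
  exact Prod.ext (by omega) (by omega)

lemma inter02 {n : ℕ} {p : ℤ × ℤ} (h0 : p ∈ sierpVerts (n+1))
    (h2 : (p.1, p.2 - 2^n) ∈ sierpVerts (n+1)) : p = (0, 2^n) := by
  obtain ⟨a1, a2, a3⟩ := verts_bounds n p h0
  obtain ⟨b1, b2, b3⟩ := verts_bounds n _ h2
  simp only at b1 b2 b3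
  have h2 : (0:ℤ) < 2^n := by positivity
  exact Prod.ext (by omega) (by omega)

lemma inter12 {n : ℕ} {p : ℤ × ℤ} (h1 : (p.1 - 2^n, p.2) ∈ sierpVerts (n+1))
    (h2 : (p.1, p.2 - 2^n) ∈ sierpVerts (n+1)) : p = (2^n, 2^n) := by
  obtain ⟨a1, a2, a3⟩ := verts_bounds n _ h1
  obtain ⟨b1, b2, b3⟩ := verts_bounds n _ h2
  simp only at a1 a2 a3 b1 b2 b3
  exact Prod.ext (by omega) (by omega)

/-- Distance-to-corner potential on `S_{n+2}`. -/
noncomputable def phi (n : ℕ) (p : ℤ × ℤ) : ℤ :=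
  if h : p ∈ sierpVerts (n+1) then
    ((sierpGraph (n+1)).dist ⟨(0,0), cornerA_mem n⟩ ⟨p, h⟩ : ℤ)
  else if h1 : (p.1 - 2^n, p.2) ∈ sierpVerts (n+1) then
    2^n + ((sierpGraph (n+1)).dist ⟨(0,0), cornerA_mem n⟩ ⟨(p.1 - 2^n, p.2), h1⟩ : ℤ)
  else if h2 : (p.1, p.2 - 2^n) ∈ sierpVerts (n+1) then
    2^n + ((sierpGraph (n+1)).dist ⟨(0,0), cornerA_mem n⟩ ⟨(p.1, p.2 - 2^n), h2⟩ : ℤ)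
  else 0

lemma phiE0 {n : ℕ} {p : ℤ × ℤ} (hp : p ∈ sierpVerts (n+1)) :
    phi n p = ((sierpGraph (n+1)).dist ⟨(0,0), cornerA_mem n⟩ ⟨p, hp⟩ : ℤ) := by
  rw [phi, dif_pos hp]

lemma phiE1 {n : ℕ} {p : ℤ × ℤ} (hp : (p.1 - 2^n, p.2) ∈ sierpVerts (n+1)) :
    phi n p = 2^n + ((sierpGraph (n+1)).dist ⟨(0,0), cornerA_mem n⟩ ⟨(p.1 - 2^n, p.2), hp⟩ : ℤ) := by
  by_cases h0 : p ∈ sierpVerts (n+1)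
  · have hpe := inter01 h0 hp
    subst hpe
    rw [phiE0 h0]
    have e1 : (sierpGraph (n+1)).dist ⟨(0,0), cornerA_mem n⟩ ⟨((2^n,0) : ℤ×ℤ), h0⟩ = 2^n := by
      rw [dist_congr (u' := ⟨((0,0):ℤ×ℤ), cornerA_mem n⟩) (v' := ⟨((2^n,0):ℤ×ℤ), cornerB_mem n⟩) rfl rfl]
      exact corner_dist_AB n
    have e2 : (sierpGraph (n+1)).dist ⟨(0,0), cornerA_mem n⟩
        ⟨(((2^n,0) : ℤ×ℤ).1 - 2^n, ((2^n,0) : ℤ×ℤ).2), hp⟩ = 0 := by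
      rw [dist_congr (u' := ⟨((0,0):ℤ×ℤ), cornerA_mem n⟩) (v' := ⟨((0,0):ℤ×ℤ), cornerA_mem n⟩) rfl (by simp)]
      exact SimpleGraph.dist_self
    rw [e1, e2]
    push_cast
    ring
  · rw [phi, dif_neg h0, dif_pos hp]

lemma phiE2 {n : ℕ} {p : ℤ × ℤ} (hp : (p.1, p.2 - 2^n) ∈ sierpVerts (n+1)) :
    phi n p = 2^n + ((sierpGraph (n+1)).dist ⟨(0,0), cornerA_mem n⟩ ⟨(p.1, p.2 - 2^n), hp⟩ : ℤ) := by
  by_cases h0 : p ∈ sierpVerts (n+1)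
  · have hpe := inter02 h0 hp
    subst hpe
    rw [phiE0 h0]
    have e1 : (sierpGraph (n+1)).dist ⟨(0,0), cornerA_mem n⟩ ⟨((0,2^n) : ℤ×ℤ), h0⟩ = 2^n := by
      rw [dist_congr (u' := ⟨((0,0):ℤ×ℤ), cornerA_mem n⟩) (v' := ⟨((0,2^n):ℤ×ℤ), cornerC_mem n⟩) rfl rfl]
      exact corner_dist_AC n
    have e2 : (sierpGraph (n+1)).dist ⟨(0,0), cornerA_mem n⟩
        ⟨(((0,2^n) : ℤ×ℤ).1, ((0,2^n) : ℤ×ℤ).2 - 2^n), hp⟩ = 0 := by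
      rw [dist_congr (u' := ⟨((0,0):ℤ×ℤ), cornerA_mem n⟩) (v' := ⟨((0,0):ℤ×ℤ), cornerA_mem n⟩) rfl (by simp)]
      exact SimpleGraph.dist_self
    rw [e1, e2]
    push_cast
    ring
  · by_cases h1 : (p.1 - 2^n, p.2) ∈ sierpVerts (n+1)
    · have hpe := inter12 h1 hp
      subst hpe
      rw [phi, dif_neg h0, dif_pos h1]
      have e1 : (sierpGraph (n+1)).dist ⟨(0,0), cornerA_mem n⟩
          ⟨(((2^n,2^n) : ℤ×ℤ).1 - 2^n, ((2^n,2^n) : ℤ×ℤ).2), h1⟩ = 2^n := by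
        rw [dist_congr (u' := ⟨((0,0):ℤ×ℤ), cornerA_mem n⟩) (v' := ⟨((0,2^n):ℤ×ℤ), cornerC_mem n⟩) rfl (by simp)]
        exact corner_dist_AC n
      have e2 : (sierpGraph (n+1)).dist ⟨(0,0), cornerA_mem n⟩
          ⟨(((2^n,2^n) : ℤ×ℤ).1, ((2^n,2^n) : ℤ×ℤ).2 - 2^n), hp⟩ = 2^n := by
        rw [dist_congr (u' := ⟨((0,0):ℤ×ℤ), cornerA_mem n⟩) (v' := ⟨((2^n,0):ℤ×ℤ), cornerB_mem n⟩) rfl (by simp)]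
        exact corner_dist_AB n
      rw [e1, e2]
    · rw [phi, dif_neg h0, dif_neg h1, dif_pos hp]

lemma phi_edge {n : ℕ} {p q : ℤ × ℤ} (e : (p, q) ∈ sierpEdges (n+2)) :
    |phi n p - phi n q| ≤ 1 := by
  rcases (edges_succ_succ n).1 e with h | h | h
  · obtain ⟨hp, hq, h3⟩ := edges_spec n _ h
    simp only at hp hq h3
    have hne : (⟨p, hp⟩ : {x : ℤ × ℤ // x ∈ sierpVerts (n+1)}) ≠ ⟨q, hq⟩ := by
      simp only [ne_eq, Subtype.mk.injEq]
      rintro rfl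
      rcases h3 with ⟨h4, -⟩ | ⟨-, h4⟩ | ⟨h4, -⟩ <;> omega
    have adj : (sierpGraph (n+1)).Adj ⟨p, hp⟩ ⟨q, hq⟩ := adj_iff.2 ⟨hne, Or.inl h⟩
    rw [phiE0 hp, phiE0 hq]
    exact dist_adj_lip (connected n) adj
  · obtain ⟨hp, hq, h3⟩ := edges_spec n _ h
    simp only at hp hq h3
    have hne : (⟨(p.1 - 2^n, p.2), hp⟩ : {x : ℤ × ℤ // x ∈ sierpVerts (n+1)}) ≠ ⟨(q.1 - 2^n, q.2), hq⟩ := by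
      simp only [ne_eq, Subtype.mk.injEq, Prod.mk.injEq]
      rintro ⟨h5, h6⟩
      rcases h3 with ⟨h4, -⟩ | ⟨-, h4⟩ | ⟨h4, -⟩ <;> omega
    have adj : (sierpGraph (n+1)).Adj ⟨(p.1 - 2^n, p.2), hp⟩ ⟨(q.1 - 2^n, q.2), hq⟩ := adj_iff.2 ⟨hne, Or.inl h⟩
    rw [phiE1 hp, phiE1 hq]
    rw [add_sub_add_left_eq_sub]
    exact dist_adj_lip (connected n) adj
  · obtain ⟨hp, hq, h3⟩ := edges_spec n _ h
    simp only at hp hq h3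
    have hne : (⟨(p.1, p.2 - 2^n), hp⟩ : {x : ℤ × ℤ // x ∈ sierpVerts (n+1)}) ≠ ⟨(q.1, q.2 - 2^n), hq⟩ := by
      simp only [ne_eq, Subtype.mk.injEq, Prod.mk.injEq]
      rintro ⟨h5, h6⟩
      rcases h3 with ⟨h4, -⟩ | ⟨-, h4⟩ | ⟨h4, -⟩ <;> omega
    have adj : (sierpGraph (n+1)).Adj ⟨(p.1, p.2 - 2^n), hp⟩ ⟨(q.1, q.2 - 2^n), hq⟩ := adj_iff.2 ⟨hne, Or.inl h⟩
    rw [phiE2 hp, phiE2 hq]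
    rw [add_sub_add_left_eq_sub]
    exact dist_adj_lip (connected n) adj

lemma cornerA_mem2 (n : ℕ) : ((0,0) : ℤ × ℤ) ∈ sierpVerts (n+2) := cornerA_mem (n+1)
lemma connected2 (n : ℕ) : (sierpGraph (n+2)).Connected := connected (n+1)

lemma phi_lip {n : ℕ} (u v : {x : ℤ × ℤ // x ∈ sierpVerts (n+2)})
    (h : (sierpGraph (n+2)).Adj u v) : |phi n u.1 - phi n v.1| ≤ 1 := by
  rcases (adj_iff.1 h).2 with h2 | h2
  · exact phi_edge h2
  · rw [abs_sub_comm]; exact phi_edge h2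

lemma phi_le_dist {n : ℕ} (u : {x : ℤ × ℤ // x ∈ sierpVerts (n+2)}) :
    phi n u.1 ≤ ((sierpGraph (n+2)).dist ⟨(0,0), cornerA_mem2 n⟩ u : ℤ) := by
  have hr := (connected2 n).preconnected ⟨((0,0) : ℤ×ℤ), cornerA_mem2 n⟩ u
  have h2 := dist_lip (fun w : {x : ℤ × ℤ // x ∈ sierpVerts (n+2)} => phi n w.1)
    (fun a b hab => phi_lip a b hab) hr
  have hA : phi n ((0,0) : ℤ×ℤ) = 0 := by
    rw [phiE0 (cornerA_mem n)]
    rw [dist_congr (u' := ⟨((0,0):ℤ×ℤ), cornerA_mem n⟩) (v' := ⟨((0,0):ℤ×ℤ), cornerA_mem n⟩) rfl rfl,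
      SimpleGraph.dist_self]
    simp
  simp only [hA] at h2
  calc phi n u.1 ≤ |phi n u.1| := le_abs_self _
    _ = |0 - phi n u.1| := by rw [zero_sub, abs_neg]
    _ ≤ _ := h2

lemma lower0 (n : ℕ) {p : ℤ × ℤ} (hp : p ∈ sierpVerts (n+1)) :
    (sierpGraph (n+1)).dist ⟨(0,0), cornerA_mem n⟩ ⟨p, hp⟩ ≤
      (sierpGraph (n+2)).dist ⟨(0,0), cornerA_mem2 n⟩ ⟨p, mem0 hp⟩ := by
  have h := phi_le_dist (n := n) ⟨p, mem0 hp⟩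
  rw [phiE0 hp] at h
  exact_mod_cast h

lemma lower1 (n : ℕ) {p : ℤ × ℤ} (hp : p ∈ sierpVerts (n+1)) :
    2^n + (sierpGraph (n+1)).dist ⟨(0,0), cornerA_mem n⟩ ⟨p, hp⟩ ≤
      (sierpGraph (n+2)).dist ⟨(0,0), cornerA_mem2 n⟩ ⟨(p.1 + 2^n, p.2), mem1 hp⟩ := by
  have h := phi_le_dist (n := n) ⟨(p.1 + 2^n, p.2), mem1 hp⟩
  have hp' : ((p.1 + 2^n - 2^n, p.2) : ℤ×ℤ) ∈ sierpVerts (n+1) := by simpa using hp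
  rw [phiE1 (p := (p.1 + 2^n, p.2)) hp'] at h
  rw [dist_congr (u' := ⟨((0,0):ℤ×ℤ), cornerA_mem n⟩) (v' := ⟨p, hp⟩) rfl (by simp)] at h
  exact_mod_cast h

lemma lower2 (n : ℕ) {p : ℤ × ℤ} (hp : p ∈ sierpVerts (n+1)) :
    2^n + (sierpGraph (n+1)).dist ⟨(0,0), cornerA_mem n⟩ ⟨p, hp⟩ ≤
      (sierpGraph (n+2)).dist ⟨(0,0), cornerA_mem2 n⟩ ⟨(p.1, p.2 + 2^n), mem2 hp⟩ := by
  have h := phi_le_dist (n := n) ⟨(p.1, p.2 + 2^n), mem2 hp⟩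
  have hp' : ((p.1, p.2 + 2^n - 2^n) : ℤ×ℤ) ∈ sierpVerts (n+1) := by simpa using hp
  rw [phiE2 (p := (p.1, p.2 + 2^n)) hp'] at h
  rw [dist_congr (u' := ⟨((0,0):ℤ×ℤ), cornerA_mem n⟩) (v' := ⟨p, hp⟩) rfl (by simp)] at h
  exact_mod_cast h

end SierpAux
namespace SierpAux

def rotP (s : ℤ) (p : ℤ × ℤ) : ℤ × ℤ := (s - p.1 - p.2, p.1)

lemma rot_verts : ∀ n : ℕ, ∀ p ∈ sierpVerts (n+1), rotP (2^n) p ∈ sierpVerts (n+1) := by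
  intro n
  induction n with
  | zero => intro p hp; fin_cases hp <;> decide
  | succ m ih =>
    intro p hp
    rcases (verts_succ_succ m).1 hp with h | h | h
    · refine (verts_succ_succ m).2 (Or.inr (Or.inl ?_))
      have e : ((rotP (2^(m+1)) p).1 - 2^m, (rotP (2^(m+1)) p).2) = rotP (2^m) p :=
        Prod.ext (by simp [rotP]; ring) (by simp [rotP])
      rw [e]; exact ih p h
    · refine (verts_succ_succ m).2 (Or.inr (Or.inr ?_))
      have e : ((rotP (2^(m+1)) p).1, (rotP (2^(m+1)) p).2 - 2^m) = rotP (2^m) (p.1 - 2^m, p.2) :=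
        Prod.ext (by simp [rotP]; ring) (by simp [rotP])
      rw [e]; exact ih _ h
    · refine (verts_succ_succ m).2 (Or.inl ?_)
      have e : rotP (2^(m+1)) p = rotP (2^m) (p.1, p.2 - 2^m) :=
        Prod.ext (by simp [rotP]; ring) (by simp [rotP])
      rw [e]; exact ih _ h

lemma rot_edges : ∀ n : ℕ, ∀ e ∈ sierpEdges (n+1),
    (rotP (2^n) e.1, rotP (2^n) e.2) ∈ sierpEdges (n+1) ∨
    (rotP (2^n) e.2, rotP (2^n) e.1) ∈ sierpEdges (n+1) := by
  intro n
  induction n with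
  | zero => intro e he; fin_cases he <;> decide
  | succ m ih =>
    intro e he
    rcases (edges_succ_succ m).1 he with h | h | h
    · -- copy0 : rot goes to copy1
      have e1 : rotP (2^(m+1)) e.1 = ((rotP (2^m) e.1).1 + 2^m, (rotP (2^m) e.1).2) :=
        Prod.ext (by simp [rotP]; ring) (by simp [rotP])
      have e2 : rotP (2^(m+1)) e.2 = ((rotP (2^m) e.2).1 + 2^m, (rotP (2^m) e.2).2) :=
        Prod.ext (by simp [rotP]; ring) (by simp [rotP])
      rcases ih e h with h' | h'
      · exact Or.inl (by rw [e1, e2]; exact edge1 h')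
      · exact Or.inr (by rw [e1, e2]; exact edge1 h')
    · -- copy1 : rot goes to copy2
      set f : (ℤ×ℤ) × (ℤ×ℤ) := ((e.1.1 - 2^m, e.1.2), (e.2.1 - 2^m, e.2.2)) with hf
      have e1 : rotP (2^(m+1)) e.1 = ((rotP (2^m) f.1).1, (rotP (2^m) f.1).2 + 2^m) :=
        Prod.ext (by simp [rotP, hf]; ring) (by simp [rotP, hf])
      have e2 : rotP (2^(m+1)) e.2 = ((rotP (2^m) f.2).1, (rotP (2^m) f.2).2 + 2^m) :=
        Prod.ext (by simp [rotP, hf]; ring) (by simp [rotP, hf])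
      rcases ih f h with h' | h'
      · exact Or.inl (by rw [e1, e2]; exact edge2 h')
      · exact Or.inr (by rw [e1, e2]; exact edge2 h')
    · -- copy2 : rot goes to copy0
      set f : (ℤ×ℤ) × (ℤ×ℤ) := ((e.1.1, e.1.2 - 2^m), (e.2.1, e.2.2 - 2^m)) with hf
      have e1 : rotP (2^(m+1)) e.1 = rotP (2^m) f.1 :=
        Prod.ext (by simp [rotP, hf]; ring) (by simp [rotP, hf])
      have e2 : rotP (2^(m+1)) e.2 = rotP (2^m) f.2 :=
        Prod.ext (by simp [rotP, hf]; ring) (by simp [rotP, hf])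
      rcases ih f h with h' | h'
      · exact Or.inl (by rw [e1, e2]; exact edge0 h')
      · exact Or.inr (by rw [e1, e2]; exact edge0 h')

lemma rotP_inj (s : ℤ) {p q : ℤ × ℤ} (h : rotP s p = rotP s q) : p = q := by
  simp only [rotP, Prod.mk.injEq] at h
  exact Prod.ext h.2 (by omega)

def rotHom (n : ℕ) : sierpGraph (n+1) →g sierpGraph (n+1) where
  toFun := fun u => ⟨rotP (2^n) u.1, rot_verts n u.1 u.2⟩
  map_rel' := by
    rintro u v hadj
    obtain ⟨h1, h2⟩ := adj_iff.1 hadj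
    have hne : u.1 ≠ v.1 := fun e => h1 (Subtype.ext e)
    refine adj_iff.2 ⟨?_, ?_⟩
    · simp only [ne_eq, Subtype.mk.injEq]
      exact fun hh => hne (rotP_inj _ hh)
    · rcases h2 with h | h
      · exact rot_edges n (u.1, v.1) h
      · exact (rot_edges n (v.1, u.1) h).symm

lemma rotP_cube (s : ℤ) (p : ℤ × ℤ) : rotP s (rotP s (rotP s p)) = p :=
  Prod.ext (by simp [rotP]; ring) (by simp [rotP]; ring)

lemma rotHom_cube (n : ℕ) (u : {x : ℤ × ℤ // x ∈ sierpVerts (n+1)}) :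
    rotHom n (rotHom n (rotHom n u)) = u := Subtype.ext (rotP_cube _ _)

lemma rot_dist (n : ℕ) (u v : {x : ℤ × ℤ // x ∈ sierpVerts (n+1)}) :
    (sierpGraph (n+1)).dist (rotHom n u) (rotHom n v) = (sierpGraph (n+1)).dist u v := by
  have pre := (connected n).preconnected
  have l1 := dist_hom_le (rotHom n) (pre u v)
  have l2 := dist_hom_le (rotHom n) (pre (rotHom n u) (rotHom n v))
  have l3 := dist_hom_le (rotHom n) (pre (rotHom n (rotHom n u)) (rotHom n (rotHom n v)))
  rw [rotHom_cube, rotHom_cube] at l3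
  omega

def rotEquiv (n : ℕ) : {x : ℤ × ℤ // x ∈ sierpVerts (n+1)} ≃ {x : ℤ × ℤ // x ∈ sierpVerts (n+1)} where
  toFun := rotHom n
  invFun := fun u => rotHom n (rotHom n u)
  left_inv := fun u => rotHom_cube n u
  right_inv := fun u => rotHom_cube n u

lemma rot_sum (n : ℕ) (v : {x : ℤ × ℤ // x ∈ sierpVerts (n+1)}) :
    ∑ u : {x : ℤ × ℤ // x ∈ sierpVerts (n+1)}, 2 ^ ((sierpGraph (n+1)).dist u (rotHom n v)) =
    ∑ u : {x : ℤ × ℤ // x ∈ sierpVerts (n+1)}, 2 ^ ((sierpGraph (n+1)).dist u v) := by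
  rw [← Equiv.sum_comp (rotEquiv n) (fun u => 2 ^ ((sierpGraph (n+1)).dist u (rotHom n v)))]
  exact Finset.sum_congr rfl fun u _ => by
    show (2:ℕ) ^ ((sierpGraph (n+1)).dist (rotHom n u) (rotHom n v)) = _
    rw [rot_dist]

end SierpAux
namespace SierpAux

lemma filter_eq_image (n : ℕ) :
    (Finset.univ.filter (fun u : {x : ℤ × ℤ // x ∈ sierpVerts (n+2)} => u.1 ∈ sierpVerts (n+1))) =
    Finset.univ.image (fun u' : {x : ℤ × ℤ // x ∈ sierpVerts (n+1)} =>
      (⟨u'.1, mem0 u'.2⟩ : {x : ℤ × ℤ // x ∈ sierpVerts (n+2)})) := by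
  ext u
  simp only [Finset.mem_filter, Finset.mem_univ, true_and, Finset.mem_image]
  constructor
  · intro h; exact ⟨⟨u.1, h⟩, Subtype.ext rfl⟩
  · rintro ⟨u', -, rfl⟩; exact u'.2

lemma emb_inj (n : ℕ) : ∀ x ∈ (Finset.univ : Finset {p : ℤ × ℤ // p ∈ sierpVerts (n+1)}),
    ∀ y ∈ Finset.univ, (⟨x.1, mem0 x.2⟩ : {p : ℤ × ℤ // p ∈ sierpVerts (n+2)}) = ⟨y.1, mem0 y.2⟩ → x = y := by
  intro x _ y _ h
  exact Subtype.ext (congrArg (fun z : {p : ℤ × ℤ // p ∈ sierpVerts (n+2)} => z.1) h)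

lemma core (n : ℕ)
    (IH : ∀ v a : {x : ℤ × ℤ // x ∈ sierpVerts (n+1)}, a.1 ∈ sierpCorners (n+1) →
      ∑ u : {x : ℤ × ℤ // x ∈ sierpVerts (n+1)}, 2 ^ ((sierpGraph (n+1)).dist u v) ≤
      ∑ u : {x : ℤ × ℤ // x ∈ sierpVerts (n+1)}, 2 ^ ((sierpGraph (n+1)).dist u a))
    (w : {x : ℤ × ℤ // x ∈ sierpVerts (n+2)}) (hw : w.1 ∈ sierpVerts (n+1)) :
    ∑ u : {x : ℤ × ℤ // x ∈ sierpVerts (n+2)}, 2 ^ ((sierpGraph (n+2)).dist u w) ≤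
    ∑ u : {x : ℤ × ℤ // x ∈ sierpVerts (n+2)}, 2 ^ ((sierpGraph (n+2)).dist u ⟨(0,0), cornerA_mem2 n⟩) := by
  classical
  set A : {x : ℤ × ℤ // x ∈ sierpVerts (n+2)} := ⟨(0,0), cornerA_mem2 n⟩ with hA
  have tri : ∀ a b c : {p : ℤ × ℤ // p ∈ sierpVerts (n+2)},
      (sierpGraph (n+2)).dist a c ≤ (sierpGraph (n+2)).dist a b + (sierpGraph (n+2)).dist b c :=
    fun a b c => (connected2 n).dist_triangle
  rw [← Finset.sum_filter_add_sum_filter_not Finset.univ (fun u => u.1 ∈ sierpVerts (n+1))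
    (fun u => 2 ^ ((sierpGraph (n+2)).dist u w)),
    ← Finset.sum_filter_add_sum_filter_not Finset.univ (fun u => u.1 ∈ sierpVerts (n+1))
    (fun u => 2 ^ ((sierpGraph (n+2)).dist u A))]
  have part1 : ∑ u ∈ Finset.univ.filter (fun u : {x : ℤ × ℤ // x ∈ sierpVerts (n+2)} => u.1 ∈ sierpVerts (n+1)),
      2 ^ ((sierpGraph (n+2)).dist u w) ≤
      ∑ u ∈ Finset.univ.filter (fun u : {x : ℤ × ℤ // x ∈ sierpVerts (n+2)} => u.1 ∈ sierpVerts (n+1)),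
      2 ^ ((sierpGraph (n+2)).dist u A) := by
    rw [filter_eq_image, Finset.sum_image (emb_inj n), Finset.sum_image (emb_inj n)]
    calc ∑ u' : {x : ℤ × ℤ // x ∈ sierpVerts (n+1)},
          2 ^ ((sierpGraph (n+2)).dist ⟨u'.1, mem0 u'.2⟩ w)
        ≤ ∑ u' : {x : ℤ × ℤ // x ∈ sierpVerts (n+1)},
          2 ^ ((sierpGraph (n+1)).dist u' ⟨w.1, hw⟩) := by
          refine Finset.sum_le_sum fun u' _ => Nat.pow_le_pow_right (by norm_num) ?_
          exact dist0_le' n u'.1 w.1 u'.2 hw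
      _ ≤ ∑ u' : {x : ℤ × ℤ // x ∈ sierpVerts (n+1)},
          2 ^ ((sierpGraph (n+1)).dist u' ⟨(0,0), cornerA_mem n⟩) := by
          refine IH _ _ ?_
          simp [sierpCorners]
      _ ≤ ∑ u' : {x : ℤ × ℤ // x ∈ sierpVerts (n+1)},
          2 ^ ((sierpGraph (n+2)).dist ⟨u'.1, mem0 u'.2⟩ A) := by
          refine Finset.sum_le_sum fun u' _ => Nat.pow_le_pow_right (by norm_num) ?_
          rw [SimpleGraph.dist_comm]
          rw [SimpleGraph.dist_comm (G := sierpGraph (n+2))]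
          exact lower0 n u'.2
  have part2 : ∑ u ∈ Finset.univ.filter (fun u : {x : ℤ × ℤ // x ∈ sierpVerts (n+2)} => ¬ u.1 ∈ sierpVerts (n+1)),
      2 ^ ((sierpGraph (n+2)).dist u w) ≤
      ∑ u ∈ Finset.univ.filter (fun u : {x : ℤ × ℤ // x ∈ sierpVerts (n+2)} => ¬ u.1 ∈ sierpVerts (n+1)),
      2 ^ ((sierpGraph (n+2)).dist u A) := by
    refine Finset.sum_le_sum fun u hu => Nat.pow_le_pow_right (by norm_num) ?_
    have hnot : ¬ u.1 ∈ sierpVerts (n+1) := (Finset.mem_filter.1 hu).2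
    rcases (verts_succ_succ n).1 u.2 with h | h | h
    · exact absurd h hnot
    · -- copy 1
      set x : {p : ℤ × ℤ // p ∈ sierpVerts (n+2)} := ⟨(2^n,0), mem0 (cornerB_mem n)⟩ with hx
      have t1 : (sierpGraph (n+2)).dist u x ≤
          (sierpGraph (n+1)).dist ⟨(u.1.1 - 2^n, u.1.2), h⟩ ⟨(0,0), cornerA_mem n⟩ := by
        calc (sierpGraph (n+2)).dist u x
            = (sierpGraph (n+2)).dist ⟨(u.1.1 - 2^n + 2^n, u.1.2), mem1 h⟩
              ⟨((0:ℤ) + 2^n, (0:ℤ)), mem1 (cornerA_mem n)⟩ :=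
              dist_congr (Prod.ext (by ring) rfl) (Prod.ext (by simp [hx]) rfl)
          _ ≤ _ := dist1_le' n (u.1.1 - 2^n, u.1.2) (0,0) h (cornerA_mem n)
      have t2 : (sierpGraph (n+2)).dist x w ≤ 2^n := by
        calc (sierpGraph (n+2)).dist x w
            = (sierpGraph (n+2)).dist ⟨(2^n,0), mem0 (cornerB_mem n)⟩ ⟨w.1, mem0 hw⟩ :=
              dist_congr rfl rfl
          _ ≤ (sierpGraph (n+1)).dist ⟨(2^n,0), cornerB_mem n⟩ ⟨w.1, hw⟩ :=
              dist0_le' n (2^n,0) w.1 (cornerB_mem n) hw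
          _ ≤ 2^n := by
              rw [SimpleGraph.dist_comm]
              exact (ecc_bound n ⟨w.1, hw⟩).2.1
      have t3 : 2^n + (sierpGraph (n+1)).dist ⟨(0,0), cornerA_mem n⟩ ⟨(u.1.1 - 2^n, u.1.2), h⟩ ≤
          (sierpGraph (n+2)).dist A u := by
        calc 2^n + (sierpGraph (n+1)).dist ⟨(0,0), cornerA_mem n⟩ ⟨(u.1.1 - 2^n, u.1.2), h⟩
            ≤ _ := lower1 n h
          _ = (sierpGraph (n+2)).dist A u := dist_congr (u' := A) (v' := u) rfl (Prod.ext (by simp) rfl)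
      have c1 := tri u x w
      have c2 : (sierpGraph (n+1)).dist ⟨(u.1.1 - 2^n, u.1.2), h⟩ ⟨(0,0), cornerA_mem n⟩ =
          (sierpGraph (n+1)).dist ⟨(0,0), cornerA_mem n⟩ ⟨(u.1.1 - 2^n, u.1.2), h⟩ :=
        SimpleGraph.dist_comm
      have c3 : (sierpGraph (n+2)).dist A u = (sierpGraph (n+2)).dist u A := SimpleGraph.dist_comm
      omega
    · -- copy 2
      set y : {p : ℤ × ℤ // p ∈ sierpVerts (n+2)} := ⟨(0,2^n), mem0 (cornerC_mem n)⟩ with hy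
      have t1 : (sierpGraph (n+2)).dist u y ≤
          (sierpGraph (n+1)).dist ⟨(u.1.1, u.1.2 - 2^n), h⟩ ⟨(0,0), cornerA_mem n⟩ := by
        calc (sierpGraph (n+2)).dist u y
            = (sierpGraph (n+2)).dist ⟨(u.1.1, u.1.2 - 2^n + 2^n), mem2 h⟩
              ⟨((0:ℤ), (0:ℤ) + 2^n), mem2 (cornerA_mem n)⟩ :=
              dist_congr (Prod.ext rfl (by ring)) (Prod.ext rfl (by simp [hy]))
          _ ≤ _ := dist2_le' n (u.1.1, u.1.2 - 2^n) (0,0) h (cornerA_mem n)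
      have t2 : (sierpGraph (n+2)).dist y w ≤ 2^n := by
        calc (sierpGraph (n+2)).dist y w
            = (sierpGraph (n+2)).dist ⟨(0,2^n), mem0 (cornerC_mem n)⟩ ⟨w.1, mem0 hw⟩ :=
              dist_congr rfl rfl
          _ ≤ (sierpGraph (n+1)).dist ⟨(0,2^n), cornerC_mem n⟩ ⟨w.1, hw⟩ :=
              dist0_le' n (0,2^n) w.1 (cornerC_mem n) hw
          _ ≤ 2^n := by
              rw [SimpleGraph.dist_comm]
              exact (ecc_bound n ⟨w.1, hw⟩).2.2
      have t3 : 2^n + (sierpGraph (n+1)).dist ⟨(0,0), cornerA_mem n⟩ ⟨(u.1.1, u.1.2 - 2^n), h⟩ ≤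
          (sierpGraph (n+2)).dist A u := by
        calc 2^n + (sierpGraph (n+1)).dist ⟨(0,0), cornerA_mem n⟩ ⟨(u.1.1, u.1.2 - 2^n), h⟩
            ≤ _ := lower2 n h
          _ = (sierpGraph (n+2)).dist A u := dist_congr (u' := A) (v' := u) rfl (Prod.ext rfl (by simp))
      have c1 := tri u y w
      have c2 : (sierpGraph (n+1)).dist ⟨(u.1.1, u.1.2 - 2^n), h⟩ ⟨(0,0), cornerA_mem n⟩ =
          (sierpGraph (n+1)).dist ⟨(0,0), cornerA_mem n⟩ ⟨(u.1.1, u.1.2 - 2^n), h⟩ :=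
        SimpleGraph.dist_comm
      have c3 : (sierpGraph (n+2)).dist A u = (sierpGraph (n+2)).dist u A := SimpleGraph.dist_comm
      omega
  exact add_le_add part1 part2

lemma rotHom_coe (n : ℕ) (u : {x : ℤ × ℤ // x ∈ sierpVerts (n+1)}) :
    (rotHom n u).1 = rotP (2^n) u.1 := rfl

lemma main : ∀ k : ℕ, ∀ v a : {x : ℤ × ℤ // x ∈ sierpVerts (k+1)}, a.1 ∈ sierpCorners (k+1) →
    ∑ u : {x : ℤ × ℤ // x ∈ sierpVerts (k+1)}, 2 ^ ((sierpGraph (k+1)).dist u v) ≤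
    ∑ u : {x : ℤ × ℤ // x ∈ sierpVerts (k+1)}, 2 ^ ((sierpGraph (k+1)).dist u a) := by
  intro k
  induction k with
  | zero =>
    intro v a ha
    have key : ∀ w : {x : ℤ × ℤ // x ∈ sierpVerts 1},
        ∑ u : {x : ℤ × ℤ // x ∈ sierpVerts 1}, 2 ^ ((sierpGraph 1).dist u w) =
        1 + 2 * (Finset.univ.erase w).card := by
      intro w
      rw [← Finset.add_sum_erase _ _ (Finset.mem_univ w)]
      congr 1
      · rw [SimpleGraph.dist_self, pow_zero]
      · rw [Finset.sum_congr rfl (fun u hu => ?_), Finset.sum_const, smul_eq_mul, Nat.mul_comm]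
        rw [SimpleGraph.dist_eq_one_iff_adj.2 (adj1 u w (Finset.ne_of_mem_erase hu)), pow_one]
    rw [key v, key a, Finset.card_erase_of_mem (Finset.mem_univ v),
      Finset.card_erase_of_mem (Finset.mem_univ a)]
  | succ m ih =>
    intro v a ha
    have hc : m + 2 - 1 = m + 1 := rfl
    simp only [sierpCorners, hc, Finset.mem_insert, Finset.mem_singleton] at ha
    set A : {x : ℤ × ℤ // x ∈ sierpVerts (m+2)} := ⟨(0,0), cornerA_mem2 m⟩ with hA
    have hsumA : ∑ u : {x : ℤ × ℤ // x ∈ sierpVerts (m+2)}, 2 ^ ((sierpGraph (m+2)).dist u a) =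
        ∑ u : {x : ℤ × ℤ // x ∈ sierpVerts (m+2)}, 2 ^ ((sierpGraph (m+2)).dist u A) := by
      rcases ha with ha | ha | ha
      · rw [show a = A from Subtype.ext (by rw [ha])]
      · rw [show a = rotHom (m+1) A from Subtype.ext (by rw [ha, rotHom_coe]; simp [rotP, hA])]
        exact rot_sum (m+1) A
      · rw [show a = rotHom (m+1) (rotHom (m+1) A) from Subtype.ext (by rw [ha, rotHom_coe, rotHom_coe]; simp [rotP, hA])]
        rw [rot_sum (m+1) (rotHom (m+1) A)]
        exact rot_sum (m+1) A
    rw [hsumA]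
    rcases (verts_succ_succ m).1 v.2 with h | h | h
    · exact core m ih v h
    · have h2 : (rotHom (m+1) (rotHom (m+1) v)).1 ∈ sierpVerts (m+1) := by
        have hmem := rot_verts m _ (rot_verts m _ h)
        have e : (rotHom (m+1) (rotHom (m+1) v)).1 =
            rotP (2^m) (rotP (2^m) (v.1.1 - 2^m, v.1.2)) := by
          show rotP (2^(m+1)) (rotP (2^(m+1)) v.1) = _
          exact Prod.ext (by simp only [rotP]; ring) (by simp only [rotP]; ring)
        rw [e]; exact hmem
      calc ∑ u : {x : ℤ × ℤ // x ∈ sierpVerts (m+2)}, 2 ^ ((sierpGraph (m+2)).dist u v)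
          = ∑ u : {x : ℤ × ℤ // x ∈ sierpVerts (m+2)},
            2 ^ ((sierpGraph (m+2)).dist u (rotHom (m+1) v)) := (rot_sum (m+1) v).symm
        _ = ∑ u : {x : ℤ × ℤ // x ∈ sierpVerts (m+2)},
            2 ^ ((sierpGraph (m+2)).dist u (rotHom (m+1) (rotHom (m+1) v))) :=
            (rot_sum (m+1) (rotHom (m+1) v)).symm
        _ ≤ _ := core m ih _ h2
    · have h2 : (rotHom (m+1) v).1 ∈ sierpVerts (m+1) := by
        have hmem := rot_verts m _ h
        have e : (rotHom (m+1) v).1 = rotP (2^m) (v.1.1, v.1.2 - 2^m) := by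
          show rotP (2^(m+1)) v.1 = _
          exact Prod.ext (by simp [rotP]; ring) (by simp [rotP])
        rw [e]; exact hmem
      calc ∑ u : {x : ℤ × ℤ // x ∈ sierpVerts (m+2)}, 2 ^ ((sierpGraph (m+2)).dist u v)
          = ∑ u : {x : ℤ × ℤ // x ∈ sierpVerts (m+2)},
            2 ^ ((sierpGraph (m+2)).dist u (rotHom (m+1) v)) := (rot_sum (m+1) v).symm
        _ ≤ _ := core m ih _ h2

end SierpAux

theorem sierp_stacking_max (n : ℕ) (hn : 1 ≤ n)
    (v a : {p : ℤ × ℤ // p ∈ sierpVerts n}) (ha : a.1 ∈ sierpCorners n) :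
    ∑ u : {p : ℤ × ℤ // p ∈ sierpVerts n}, 2 ^ ((sierpGraph n).dist u v) ≤
      ∑ u : {p : ℤ × ℤ // p ∈ sierpVerts n}, 2 ^ ((sierpGraph n).dist u a) := by
  obtain ⟨k, rfl⟩ : ∃ k, n = k + 1 := ⟨n - 1, by omega⟩
  exact SierpAux.main k v a ha
end
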